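/- arXiv:math/9912128 — 11 statements merged into one kernel-verified Lean document; each statement's English description precedes it below -/
import Mathlib

section
/- If x is a totally nonnegative n×n matrix and y is a totally positive n×n matrix, then both xy and yx are totally positive. -/
/-!
By Cauchy–Binet, the minor of `x * y` on rows `r` and columns `c` is
`∑ det x[r, g] * det y[g, c]` over strictly increasing `g`. Every term is nonnegative, and
some `det x[r, g]` is nonzero: applying Cauchy–Binet to `x[r, :] * x[r, :]ᵀ`, a principal
submatrix of the positive definite `x * xᵀ`, gives `∑ det x[r, g] ^ 2 > 0`. That term is then
positive. The statement for `y * x` follows by transposition.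
-/

/-- A square real matrix is totally positive if every minor is positive. -/
def TotallyPositive {n : ℕ} (x : Matrix (Fin n) (Fin n) ℝ) : Prop :=
  ∀ (k : ℕ) (r c : Fin k → Fin n), StrictMono r → StrictMono c →
    0 < (x.submatrix r c).det

/-- A square real matrix is totally nonnegative if every minor is nonnegative. -/
def TotallyNonneg {n : ℕ} (x : Matrix (Fin n) (Fin n) ℝ) : Prop :=
  ∀ (k : ℕ) (r c : Fin k → Fin n), StrictMono r → StrictMono c →
    0 ≤ (x.submatrix r c).det

open Finset Equiv Matrix

open Classical in
/-- Every injective tuple is uniquely a strictly monotone tuple composed with a permutation. -/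
theorem Tuple.sum_injective_eq_sum_strictMono_sum_perm {α M : Type*} [LinearOrder α] [Fintype α]
    [AddCommMonoid M] {k : ℕ} (φ : (Fin k → α) → M) :
    ∑ f : Fin k → α with Function.Injective f, φ f =
      ∑ g : Fin k → α with StrictMono g, ∑ σ : Perm (Fin k), φ (g ∘ σ) := by
  rw [← sum_product']
  refine sum_nbij' (fun f ↦ (f ∘ Tuple.sort f, (Tuple.sort f)⁻¹)) (fun p ↦ p.1 ∘ p.2)
    (fun f hf ↦ ?_) (fun p hp ↦ ?_) (fun f _ ↦ ?_) (fun p hp ↦ ?_) (fun f _ ↦ ?_)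
  · simp only [mem_filter, mem_univ, true_and, mem_product, and_true] at hf ⊢
    exact (Tuple.monotone_sort f).strictMono_of_injective (hf.comp (Tuple.sort f).injective)
  · simp only [mem_filter, mem_univ, true_and, mem_product, and_true] at hp ⊢
    exact hp.injective.comp p.2.injective
  · ext i
    simp
  · obtain ⟨g, σ⟩ := p
    simp only [mem_filter, mem_univ, true_and, mem_product, and_true] at hp
    have hsort : (g ∘ σ) ∘ Tuple.sort (g ∘ σ) = g := by
      rw [Tuple.comp_perm_comp_sort_eq_comp_sort,
        Tuple.sort_eq_refl_iff_monotone.2 hp.monotone]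
      rfl
    have hσ : (Tuple.sort (g ∘ σ))⁻¹ = σ := by
      refine Equiv.ext fun i ↦ ?_
      exact hp.injective (by simpa using congrFun hsort ((Tuple.sort (g ∘ σ))⁻¹ i)) |>.symm
    simp [hsort, hσ]
  · congr 1
    ext i
    simp

namespace Matrix

variable {R : Type*} [CommRing R]

theorem det_mul_eq_sum_prod_mul_det_submatrix {n m : Type*} [Fintype n] [DecidableEq n]
    [Fintype m] (A : Matrix n m R) (B : Matrix m n R) :
    (A * B).det = ∑ f : n → m, (∏ i, A i (f i)) * (B.submatrix f id).det := by
  have hrows : A * B = of fun i ↦ ∑ j, A i j • B j := by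
    ext i l
    simp [mul_apply]
  calc (A * B).det = detRowAlternating (fun i ↦ ∑ j, A i j • B j) := by rw [hrows]; rfl
    _ = ∑ f : n → m, detRowAlternating (fun i ↦ A i (f i) • B (f i)) :=
      detRowAlternating.toMultilinearMap.map_sum fun i j ↦ A i j • B j
    _ = ∑ f : n → m, (∏ i, A i (f i)) * (B.submatrix f id).det := by
      simp only [AlternatingMap.map_smul_univ]
      rfl

theorem det_submatrix_eq_zero_of_not_injective {m n : Type*} [DecidableEq n] [Fintype n]
    (B : Matrix m n R) {f : n → m} (hf : ¬ Function.Injective f) :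
    (B.submatrix f id).det = 0 := by
  obtain ⟨i, j, hij, hne⟩ : ∃ i j, f i = f j ∧ i ≠ j := by
    simpa [Function.Injective] using hf
  exact det_zero_of_row_eq hne (by ext; simp [hij])

variable {m : Type*} {k : ℕ}

theorem sum_perm_prod_mul_det_submatrix_comp (A : Matrix (Fin k) m R) (B : Matrix m (Fin k) R)
    (g : Fin k → m) :
    ∑ σ : Perm (Fin k), (∏ i, A i (g (σ i))) * (B.submatrix (g ∘ σ) id).det =
      (A.submatrix id g).det * (B.submatrix g id).det := by
  rw [← det_transpose, det_apply', sum_mul]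
  refine sum_congr rfl fun σ _ ↦ ?_
  rw [show B.submatrix (g ∘ σ) id = (B.submatrix g id).submatrix σ id from rfl, det_permute]
  simp only [transpose_apply, submatrix_apply, id_eq]
  ring

variable [Fintype m] [LinearOrder m]

open Classical in
/-- The **Cauchy–Binet formula**. -/
theorem det_mul_eq_sum_strictMono (A : Matrix (Fin k) m R) (B : Matrix m (Fin k) R) :
    (A * B).det =
      ∑ g : Fin k → m with StrictMono g, (A.submatrix id g).det * (B.submatrix g id).det := by
  calc (A * B).det = ∑ f : Fin k → m, (∏ i, A i (f i)) * (B.submatrix f id).det :=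
        det_mul_eq_sum_prod_mul_det_submatrix A B
    _ = ∑ f : Fin k → m with Function.Injective f,
          (∏ i, A i (f i)) * (B.submatrix f id).det := by
      refine (sum_filter_of_ne fun f _ hf ↦ ?_).symm
      by_contra hinj
      exact hf (by rw [det_submatrix_eq_zero_of_not_injective B hinj, mul_zero])
    _ = _ := by
      rw [Tuple.sum_injective_eq_sum_strictMono_sum_perm]
      exact sum_congr rfl fun g _ ↦ sum_perm_prod_mul_det_submatrix_comp A B g

theorem exists_strictMono_det_submatrix_ne_zero (M : Matrix (Fin k) m R)
    (hM : (M * Mᵀ).det ≠ 0) :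
    ∃ g : Fin k → m, StrictMono g ∧ (M.submatrix id g).det ≠ 0 := by
  by_contra! hzero
  refine hM ?_
  rw [det_mul_eq_sum_strictMono]
  refine sum_eq_zero fun g hg ↦ ?_
  rw [hzero g (mem_filter.1 hg).2, zero_mul]

theorem exists_strictMono_det_submatrix_ne_zero_of_isUnit_det {n k : ℕ}
    {x : Matrix (Fin n) (Fin n) ℝ} (hx : IsUnit x.det) {r : Fin k → Fin n}
    (hr : Function.Injective r) :
    ∃ g : Fin k → Fin n, StrictMono g ∧ (x.submatrix r g).det ≠ 0 := by
  have hpos : (x * xᵀ).PosDef := by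
    simpa [conjTranspose_eq_transpose_of_trivial] using PosDef.mul_conjTranspose_self x
      (vecMul_injective_iff_isUnit.2 ((isUnit_iff_isUnit_det x).2 hx))
  have hrows : x.submatrix r id * (x.submatrix r id)ᵀ = (x * xᵀ).submatrix r r := by
    rw [submatrix_mul _ _ _ _ _ Function.bijective_id, transpose_submatrix]
  apply exists_strictMono_det_submatrix_ne_zero (x.submatrix r id)
  rw [hrows]
  exact ((hpos.submatrix hr).det_pos).ne'

end Matrix

theorem TotallyPositive.transpose {n : ℕ} {x : Matrix (Fin n) (Fin n) ℝ}
    (hx : TotallyPositive x) : TotallyPositive xᵀ := fun k r c hr hc ↦ by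
  simpa [← transpose_submatrix] using hx k c r hc hr

theorem TotallyNonneg.transpose {n : ℕ} {x : Matrix (Fin n) (Fin n) ℝ}
    (hx : TotallyNonneg x) : TotallyNonneg xᵀ := fun k r c hr hc ↦ by
  simpa [← transpose_submatrix] using hx k c r hc hr

theorem TotallyNonneg.totallyPositive_mul {n : ℕ} {x y : Matrix (Fin n) (Fin n) ℝ}
    (hx : TotallyNonneg x) (hxu : IsUnit x.det) (hy : TotallyPositive y) :
    TotallyPositive (x * y) := by
  intro k r c hr hc
  rw [submatrix_mul _ _ _ _ _ Function.bijective_id, det_mul_eq_sum_strictMono]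
  obtain ⟨g, hg, hxg⟩ := exists_strictMono_det_submatrix_ne_zero_of_isUnit_det hxu hr.injective
  refine sum_pos' (fun h hh ↦ mul_nonneg ?_ ?_)
    ⟨g, mem_filter.2 ⟨mem_univ g, hg⟩, mul_pos ?_ ?_⟩
  · exact hx k r h hr (mem_filter.1 hh).2
  · exact (hy k h c (mem_filter.1 hh).2 hc).le
  · exact (hx k r g hr hg).lt_of_ne' hxg
  · exact hy k g c hg hc

theorem stmt2 (n : ℕ) (x y : Matrix (Fin n) (Fin n) ℝ)
    (hx : TotallyNonneg x) (hxu : IsUnit x.det) (hy : TotallyPositive y) :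
    TotallyPositive (x * y) ∧ TotallyPositive (y * x) := by
  refine ⟨hx.totallyPositive_mul hxu hy, ?_⟩
  have h := hx.transpose.totallyPositive_mul (by rwa [det_transpose]) hy.transpose
  simpa [← transpose_mul] using h.transpose
end

section
/- Every invertible totally nonnegative n×n real matrix is the limit of a sequence of totally positive n×n matrices. -/
/-!
Let `G_q` be the matrix with entries `sech ((i - j) log q)`. It is a Cauchy matrix
`((x_i + y_j)⁻¹)` with increasing `x`, `y`, rescaled by positive diagonal matrices, so all its
minors are positive, and `G_q → 1` as `q → ∞`. By the Cauchy–Binet formula every minor of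
`G_q * x` is a sum of products of a positive minor of `G_q` with a nonnegative minor of `x`;
since `x` is invertible, some `k` rows of `x` give a nonzero minor in any `k` given columns,
so the sum is positive. Hence `G_q * x` is totally positive and tends to `x`.
-/

open Matrix Finset Filter Topology

section CauchyBinet

variable {R ι : Type*} [CommRing R] [Fintype ι] {k : ℕ}

theorem Matrix.det_mul_eq_sum_prod_mul_det (A : Matrix (Fin k) ι R) (B : Matrix ι (Fin k) R) :
    det (A * B) = ∑ p : Fin k → ι, (∏ i, A i (p i)) * det (B.submatrix p id) := by
  have hrows : A * B = fun i => ∑ t, A i t • B t := by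
    ext i j
    simp [Matrix.mul_apply, Finset.sum_apply]
  change detRowAlternating (A * B) = _
  rw [hrows, ← AlternatingMap.coe_multilinearMap, MultilinearMap.map_sum]
  refine sum_congr rfl fun p _ => ?_
  rw [MultilinearMap.map_smul_univ, smul_eq_mul]
  rfl

variable [LinearOrder ι]

open scoped Classical in
theorem Finset.sum_injective_eq_sum_strictMono_sum_perm {M : Type*} [AddCommMonoid M]
    (T : (Fin k → ι) → M) :
    ∑ p ∈ univ.filter (fun p : Fin k → ι => Function.Injective p), T p =
      ∑ s ∈ univ.filter (fun s : Fin k → ι => StrictMono s),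
        ∑ σ : Equiv.Perm (Fin k), T (s ∘ σ) := by
  rw [← Finset.sum_product']
  symm
  refine Finset.sum_bij (fun q _ => q.1 ∘ q.2) ?_ ?_ ?_ (fun _ _ => rfl)
  · rintro ⟨s, σ⟩ hq
    simp only [mem_product, mem_filter, mem_univ, true_and] at hq ⊢
    exact hq.1.injective.comp σ.injective
  · rintro ⟨s, σ⟩ hq ⟨s', σ'⟩ hq' h
    simp only [mem_product, mem_filter, mem_univ, true_and, and_true] at hq hq' h
    have hs : s = s' := by
      rw [← hq.range_inj hq', ← σ.surjective.range_comp s, h, σ'.surjective.range_comp]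
    subst hs
    exact Prod.ext rfl (Equiv.ext fun i => hq.injective (congrFun h i))
  · intro p hp
    have hp : Function.Injective p := (mem_filter.1 hp).2
    refine ⟨(p ∘ Tuple.sort p, (Tuple.sort p).symm), ?_, ?_⟩
    · simp only [mem_product, mem_filter, mem_univ, true_and, and_true]
      exact (Tuple.monotone_sort p).strictMono_of_injective (hp.comp (Tuple.sort p).injective)
    · ext i
      simp

open scoped Classical in
theorem Matrix.det_mul_eq_sum_strictMono_s3 (A : Matrix (Fin k) ι R) (B : Matrix ι (Fin k) R) :
    det (A * B) = ∑ s ∈ univ.filter (fun s : Fin k → ι => StrictMono s),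
      det (A.submatrix id s) * det (B.submatrix s id) := by
  rw [det_mul_eq_sum_prod_mul_det, ← sum_filter_add_sum_filter_not univ Function.Injective,
    sum_injective_eq_sum_strictMono_sum_perm]
  have h_noninj : ∀ p ∈ univ.filter (fun p : Fin k → ι => ¬ Function.Injective p),
      (∏ i, A i (p i)) * det (B.submatrix p id) = 0 := by
    intro p hp
    obtain ⟨a, b, hab, hne⟩ := Function.not_injective_iff.1 (mem_filter.1 hp).2
    rw [det_zero_of_row_eq hne (by ext; simp [hab]), mul_zero]
  rw [sum_eq_zero h_noninj, add_zero]
  refine sum_congr rfl fun s _ => ?_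
  rw [← det_transpose (A.submatrix id s), det_apply', sum_mul]
  refine sum_congr rfl fun σ _ => ?_
  rw [show B.submatrix (s ∘ σ) id = (B.submatrix s id).submatrix σ id from rfl, det_permute]
  simp only [transpose_apply, submatrix_apply, id, Function.comp_apply]
  ring

open scoped Classical in
theorem Matrix.det_submatrix_mul_eq_sum {m : Type*} [Fintype m] (A : Matrix m ι R)
    (B : Matrix ι m R) (r c : Fin k → m) :
    det ((A * B).submatrix r c) = ∑ s ∈ univ.filter (fun s : Fin k → ι => StrictMono s),
      det (A.submatrix r s) * det (B.submatrix s c) := by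
  rw [submatrix_mul A B r id c Function.bijective_id, det_mul_eq_sum_strictMono_s3]
  rfl

theorem Matrix.exists_strictMono_det_submatrix_ne_zero_s3 [Nontrivial R] {A : Matrix ι ι R}
    (hA : IsUnit A.det) {c : Fin k → ι} (hc : Function.Injective c) :
    ∃ s : Fin k → ι, StrictMono s ∧ det (A.submatrix s c) ≠ 0 := by
  have h := det_submatrix_mul_eq_sum A⁻¹ A c c
  rw [nonsing_inv_mul A hA, submatrix_one c hc, det_one] at h
  obtain ⟨s, hs, hne⟩ := exists_ne_zero_of_sum_ne_zero (h ▸ one_ne_zero)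
  exact ⟨s, (mem_filter.1 hs).2, right_ne_zero_of_mul hne⟩

end CauchyBinet

theorem Matrix.det_of_mul_mul {R n : Type*} [CommRing R] [Fintype n] [DecidableEq n]
    (u v : n → R) (A : n → n → R) :
    det (of fun i j => u i * (v j * A i j)) = (∏ i, u i) * ((∏ j, v j) * det (of A)) := by
  rw [← det_mul_row]
  exact det_mul_column u (of fun i j => v j * A i j)

section CauchyMatrix

variable {K : Type*} [Field K]

theorem Matrix.det_cauchy_succ {k : ℕ} (x y : Fin (k + 1) → K) (h : ∀ i j, x i + y j ≠ 0) :
    det (of fun i j => (x i + y j)⁻¹) =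
      (x 0 + y 0)⁻¹ * ((∏ i : Fin k, (x i.succ - x 0) / (x i.succ + y 0)) *
        ((∏ j : Fin k, (y j.succ - y 0) / (x 0 + y j.succ)) *
          det (of fun i j : Fin k => (x i.succ + y j.succ)⁻¹))) := by
  -- subtract `(x 0 + y 0) / (x i + y 0)` times row `0` from every other row `i`
  obtain ⟨B, hB⟩ : ∃ B : Matrix (Fin (k + 1)) (Fin (k + 1)) K, B = of fun i j =>
      if i = 0 then (x 0 + y j)⁻¹
      else (x i - x 0) / (x i + y 0) * ((y j - y 0) / (x 0 + y j) * (x i + y j)⁻¹) := ⟨_, rfl⟩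
  have hdet : det (of fun i j => (x i + y j)⁻¹) = det B := by
    refine det_eq_of_forall_row_eq_smul_add_const
      (fun i => if i = 0 then 0 else (x 0 + y 0) / (x i + y 0)) 0 (by simp) fun i j => ?_
    by_cases hi : i = 0
    · simp [hB, hi]
    · have := h i j; have := h i 0; have := h 0 j; have := h 0 0
      simp only [hB, of_apply, hi, if_false, if_true]
      field_simp
      ring
  have hcol : ∀ i, i ≠ 0 → B i 0 = 0 := fun i hi => by simp [hB, hi]
  rw [hdet, det_succ_column_zero, sum_eq_single 0 (fun i _ hi => by simp [hcol i hi]) (by simp)]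
  have hminor : det (B.submatrix (Fin.succAbove 0) Fin.succ) =
      (∏ i : Fin k, (x i.succ - x 0) / (x i.succ + y 0)) *
        ((∏ j : Fin k, (y j.succ - y 0) / (x 0 + y j.succ)) *
          det (of fun i j : Fin k => (x i.succ + y j.succ)⁻¹)) := by
    rw [← det_of_mul_mul]
    congr 1
    ext i j
    simp [hB, Fin.succ_ne_zero]
  rw [hminor, show B 0 0 = (x 0 + y 0)⁻¹ by simp [hB]]
  simp

theorem Matrix.det_cauchy_pos [LinearOrder K] [IsStrictOrderedRing K] :
    ∀ {k : ℕ} (x y : Fin k → K), StrictMono x → StrictMono y → (∀ i j, 0 < x i + y j) →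
      0 < det (of fun i j => (x i + y j)⁻¹)
  | 0, _, _, _, _, _ => by simp
  | k + 1, x, y, hx, hy, hpos => by
    rw [det_cauchy_succ x y fun i j => (hpos i j).ne']
    have hrows : ∀ i : Fin k, 0 < (x i.succ - x 0) / (x i.succ + y 0) := fun i =>
      div_pos (sub_pos.2 (hx (Fin.succ_pos i))) (hpos _ _)
    have hcols : ∀ j : Fin k, 0 < (y j.succ - y 0) / (x 0 + y j.succ) := fun j =>
      div_pos (sub_pos.2 (hy (Fin.succ_pos j))) (hpos _ _)
    have hminor := det_cauchy_pos (fun i => x i.succ) (fun j => y j.succ)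
      (hx.comp Fin.strictMono_succ) (hy.comp Fin.strictMono_succ) fun i j => hpos _ _
    exact mul_pos (inv_pos.2 (hpos 0 0)) (mul_pos (prod_pos fun i _ => hrows i)
      (mul_pos (prod_pos fun j _ => hcols j) hminor))

end CauchyMatrix

theorem TotallyPositive.mul_of_totallyNonneg {n : ℕ} {G x : Matrix (Fin n) (Fin n) ℝ}
    (hG : TotallyPositive G) (hx : TotallyNonneg x) (hxu : IsUnit x.det) :
    TotallyPositive (G * x) := by
  intro k r c hr hc
  obtain ⟨s, hs, hdet⟩ := exists_strictMono_det_submatrix_ne_zero_s3 hxu hc.injective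
  rw [det_submatrix_mul_eq_sum]
  refine sum_pos' (fun t ht => ?_) ⟨s, by simpa using hs, ?_⟩
  · have ht : StrictMono t := (mem_filter.1 ht).2
    exact mul_nonneg (hG k r t hr ht).le (hx k t c ht hc)
  · exact mul_pos (hG k r s hr hs) ((hx k s c hs hc).lt_of_ne' hdet)

section SechKernel

variable {n : ℕ} {q : ℝ}

/-- The matrix `(sech ((i - j) log q))ᵢⱼ`. -/
noncomputable def sechKernel (n : ℕ) (q : ℝ) : Matrix (Fin n) (Fin n) ℝ :=
  of fun i j => 2 * q ^ (i : ℕ) * q ^ (j : ℕ) / (q ^ (2 * (i : ℕ)) + q ^ (2 * (j : ℕ)))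

theorem sechKernel_totallyPositive (hq : 1 < q) : TotallyPositive (sechKernel n q) := by
  intro k r c hr hc
  have hx : StrictMono fun a => q ^ (2 * (r a : ℕ)) := fun a b hab =>
    pow_lt_pow_right₀ hq (by have := hr hab; omega)
  have hy : StrictMono fun b => q ^ (2 * (c b : ℕ)) := fun a b hab =>
    pow_lt_pow_right₀ hq (by have := hc hab; omega)
  have hsub : det ((sechKernel n q).submatrix r c) =
      (∏ a, 2 * q ^ (r a : ℕ)) * ((∏ b, q ^ (c b : ℕ)) *
        det (of fun a b => (q ^ (2 * (r a : ℕ)) + q ^ (2 * (c b : ℕ)))⁻¹)) := by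
    rw [← det_of_mul_mul]
    congr 1
    ext a b
    simp only [sechKernel, submatrix_apply, of_apply]
    ring
  have hq0 : 0 < q := one_pos.trans hq
  rw [hsub]
  exact mul_pos (prod_pos fun a _ => by positivity) (mul_pos (prod_pos fun b _ => by positivity)
    (det_cauchy_pos _ _ hx hy fun a b => by positivity))

theorem sechKernel_apply_self (hq : q ≠ 0) (i : Fin n) : sechKernel n q i i = 1 := by
  have : q ^ (i : ℕ) ≠ 0 := pow_ne_zero _ hq
  simp only [sechKernel, of_apply, pow_mul']
  field_simp
  ring

theorem sechKernel_apply_nonneg (hq : 0 ≤ q) (i j : Fin n) : 0 ≤ sechKernel n q i j := by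
  simp only [sechKernel, of_apply]
  positivity

theorem two_mul_pow_mul_pow_div_le (hq : 1 ≤ q) {a b : ℕ} (hab : a < b) :
    2 * q ^ a * q ^ b / (q ^ (2 * a) + q ^ (2 * b)) ≤ 2 / q := by
  have hq0 : 0 < q := one_pos.trans_le hq
  have key : q * (q ^ a * q ^ b) ≤ q ^ (2 * b) :=
    calc q * (q ^ a * q ^ b) = q ^ (a + 1) * q ^ b := by ring
      _ ≤ q ^ b * q ^ b := by gcongr; exact hab
      _ = q ^ (2 * b) := by ring
  rw [div_le_div_iff₀ (by positivity) hq0]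
  nlinarith [pow_pos hq0 (2 * a)]

theorem sechKernel_apply_le (hq : 1 ≤ q) {i j : Fin n} (hij : i ≠ j) :
    sechKernel n q i j ≤ 2 / q := by
  rcases Fin.lt_or_lt_of_ne hij with h | h
  · exact two_mul_pow_mul_pow_div_le hq h
  · simp only [sechKernel, of_apply]
    rw [mul_right_comm, add_comm]
    exact two_mul_pow_mul_pow_div_le hq h

theorem tendsto_sechKernel_atTop : Tendsto (sechKernel n) atTop (𝓝 1) := by
  refine tendsto_pi_nhds.2 fun i => tendsto_pi_nhds.2 fun j => ?_
  rcases eq_or_ne i j with rfl | hij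
  · rw [one_apply_eq]
    refine tendsto_const_nhds.congr' ?_
    filter_upwards [eventually_gt_atTop 0] with q hq
    exact (sechKernel_apply_self hq.ne' i).symm
  · rw [one_apply_ne hij]
    refine tendsto_of_tendsto_of_tendsto_of_le_of_le' tendsto_const_nhds
      (tendsto_const_nhds (x := (2 : ℝ)) |>.div_atTop tendsto_id) ?_ ?_
    · filter_upwards [eventually_ge_atTop 0] with q hq
      exact sechKernel_apply_nonneg hq i j
    · filter_upwards [eventually_ge_atTop 1] with q hq
      exact sechKernel_apply_le hq hij

end SechKernel

/-- Whitney's theorem: every invertible totally nonnegative matrix is the limit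
of a sequence of totally positive matrices (entrywise convergence). -/
theorem stmt3 (n : ℕ) (x : Matrix (Fin n) (Fin n) ℝ)
    (hx : TotallyNonneg x) (hxu : IsUnit x.det) :
    ∃ f : ℕ → Matrix (Fin n) (Fin n) ℝ,
      (∀ N, TotallyPositive (f N)) ∧
      Filter.Tendsto f Filter.atTop (nhds x) := by
  refine ⟨fun N => sechKernel n ((N : ℝ) + 2) * x, fun N => ?_, ?_⟩
  · have hq : (1 : ℝ) < N + 2 := by linarith [Nat.cast_nonneg (α := ℝ) N]
    exact (sechKernel_totallyPositive hq).mul_of_totallyNonneg hx hxu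
  · have hq : Tendsto (fun N : ℕ => (N : ℝ) + 2) atTop atTop :=
      tendsto_atTop_add_const_right _ 2 tendsto_natCast_atTop_atTop
    simpa using (tendsto_sechKernel_atTop.comp hq).mul_const x
end

section
/- (Desnanot–Jacobi / Lewis Carroll identity) For an n×n matrix x and indices 1 ≤ i < i' ≤ n, 1 ≤ j < j' ≤ n, one has Δ^{i',j'}(x)·Δ^{i,j}(x) − Δ^{i',j}(x)·Δ^{i,j'}(x) = det(x)·Δ^{ii',jj'}(x), where Δ^{i,j}(x) denotes the minor obtained by deleting row i and column j, and Δ^{ii',jj'}(x) the minor obtained by deleting rows i,i' and columns j,j'. -/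
open Matrix Finset


lemma DJ.det_two_col {m : Type*} [Fintype m] [DecidableEq m] {R : Type*} [CommRing R]
    (B : Matrix m m R) (i i' : m) (h : i ≠ i')
    (hB : ∀ r c, c ≠ i → c ≠ i' → B r c = if r = c then 1 else 0) :
    B.det = B i i * B i' i' - B i i' * B i' i := by
  classical
  rw [Matrix.det_apply']
  have hsub : ({1, Equiv.swap i i'} : Finset (Equiv.Perm m)) ⊆ Finset.univ := by
    simp
  rw [← Finset.sum_subset hsub ?_]
  · have hne : (1 : Equiv.Perm m) ≠ Equiv.swap i i' := by
      intro he
      have := congrFun (congrArg (fun e : Equiv.Perm m => (e : m → m)) he) i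
      simp [Equiv.swap_apply_left] at this
      exact h this
    rw [Finset.sum_pair hne]
    have prod1 : ∀ σ : Equiv.Perm m, (∀ c, c ≠ i → c ≠ i' → σ c = c) →
        ∏ c, B (σ c) c = B (σ i) i * B (σ i') i' := by
      intro σ hfix
      rw [← Finset.mul_prod_erase Finset.univ _ (Finset.mem_univ i),
        ← Finset.mul_prod_erase _ _ (Finset.mem_erase.mpr ⟨Ne.symm h, Finset.mem_univ i'⟩),
        ← mul_assoc]
      have : ∏ c ∈ (Finset.univ.erase i).erase i', B (σ c) c = 1 := by
        apply Finset.prod_eq_one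
        intro c hc
        simp only [Finset.mem_erase, Finset.mem_univ] at hc
        rw [hfix c hc.2.1 hc.1, hB _ _ hc.2.1 hc.1, if_pos rfl]
      rw [this, mul_one]
    rw [prod1 1 (fun c _ _ => rfl),
      prod1 (Equiv.swap i i') (fun c h1 h2 => Equiv.swap_apply_of_ne_of_ne h1 h2)]
    simp [Equiv.swap_apply_left, Equiv.swap_apply_right, Equiv.Perm.sign_swap h]
    ring
  · intro σ _ hσ
    simp only [Finset.mem_insert, Finset.mem_singleton] at hσ
    push_neg at hσ
    have : ∃ c, c ≠ i ∧ c ≠ i' ∧ σ c ≠ c := by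
      by_contra hc
      push_neg at hc
      have hfix : ∀ c, c ≠ i → c ≠ i' → σ c = c := fun c h1 h2 => hc c h1 h2
      have hσi : σ i = i ∨ σ i = i' := by
        by_contra h'
        push_neg at h'
        exact h'.1 (σ.injective (hfix (σ i) h'.1 h'.2))
      rcases hσi with h1 | h1
      · have h2 : σ i' = i' := by
          by_contra h'
          rcases em (σ i' = i) with h3 | h3
          · exact (h (σ.injective (h1.trans h3.symm))).elim
          · exact h' (σ.injective (hfix (σ i') h3 h'))
        apply hσ.1
        ext c
        rcases em (c = i) with rfl | hci
        · simpa using h1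
        rcases em (c = i') with rfl | hci'
        · simpa using h2
        · simpa using hfix c hci hci'
      · have h2 : σ i' = i := by
          rcases em (σ i' = i') with h3 | h3
          · exact (h (σ.injective (h1.symm ▸ h3.symm ▸ rfl : σ i = σ i')) ).elim
          rcases em (σ i' = i) with h4 | h4
          · exact h4
          · exact (h3 (σ.injective (hfix (σ i') h4 h3))).elim
        apply hσ.2
        ext c
        rcases em (c = i) with rfl | hci
        · simp [Equiv.swap_apply_left, h1]
        rcases em (c = i') with rfl | hci'
        · simp [Equiv.swap_apply_right, h2]
        · rw [Equiv.swap_apply_of_ne_of_ne hci hci']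
          exact hfix c hci hci'
    obtain ⟨c, h1, h2, h3⟩ := this
    have : B (σ c) c = 0 := by rw [hB _ _ h1 h2, if_neg h3]
    have hz : ∏ x : m, B (σ x) x = 0 :=
      Finset.prod_eq_zero (Finset.mem_univ c) this
    rw [hz, mul_zero]


lemma DJ.det_updateCol_single {m : Type*} [Fintype m] [DecidableEq m] {R : Type*} [CommRing R]
    (A : Matrix m m R) (i j : m) :
    (A.updateCol i (Pi.single j 1)).det = adjugate A i j := by
  rw [← Matrix.det_transpose, ← Matrix.updateRow_transpose, ← Matrix.adjugate_apply,
    ← Matrix.adjugate_transpose, Matrix.transpose_apply]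

lemma DJ.strictMono_unique {n m : ℕ} {i i' : Fin m} (h : i ≠ i')
    {f g : Fin n → Fin m} (hmn : m = n + 2)
    (hf : StrictMono f) (hfm : ∀ a, f a ≠ i ∧ f a ≠ i')
    (hg : StrictMono g) (hgm : ∀ a, g a ≠ i ∧ g a ≠ i') : f = g := by
  classical
  have hcard : ({i, i'}ᶜ : Finset (Fin m)).card = n := by
    rw [Finset.card_compl, Finset.card_pair h, hmn]
    simp
  have hmem : ∀ (f : Fin n → Fin m), (∀ a, f a ≠ i ∧ f a ≠ i') → ∀ a, f a ∈ ({i, i'}ᶜ : Finset (Fin m)) := by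
    intro f hfm a
    simp [Finset.mem_compl, (hfm a).1, (hfm a).2]
  rw [Finset.orderEmbOfFin_unique hcard (hmem f hfm) hf,
    Finset.orderEmbOfFin_unique hcard (hmem g hgm) hg]

lemma DJ.submatrix_updateCol {p q : ℕ} {R : Type*} [CommRing R]
    (A : Matrix (Fin q) (Fin q) R) (a b : Fin p → Fin q) (hb : Function.Injective b)
    (c₀ : Fin p) (v : Fin q → R) :
    (A.updateCol (b c₀) v).submatrix a b
      = (A.submatrix a b).updateCol c₀ (fun r => v (a r)) := by
  ext r c
  simp only [Matrix.submatrix_apply, Matrix.updateCol_apply]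
  by_cases hc : c = c₀
  · simp [hc]
  · rw [if_neg hc, if_neg (fun he => hc (hb he))]


section
variable {m : Type*} [Fintype m] [DecidableEq m] {R : Type*} [CommRing R]

lemma DJ.updateCol_comm (A : Matrix m m R) {j j' : m} (h : j ≠ j') (u v : m → R) :
    (A.updateCol j u).updateCol j' v = (A.updateCol j' v).updateCol j u := by
  ext r c
  simp only [Matrix.updateCol_apply]
  split_ifs with h1 h2
  · exact (h (h2.symm.trans h1)).elim
  · rfl
  · rfl
  · rfl

end

lemma DJ.core {n : ℕ} {S : Type*} [CommRing S]
    (A : Matrix (Fin (n + 2)) (Fin (n + 2)) S)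
    (i i' j j' : Fin (n + 2)) (hi : i < i') (hj : j < j')
    (f g : Fin n → Fin (n + 2))
    (hf : StrictMono f) (hfm : ∀ a, f a ≠ i ∧ f a ≠ i')
    (hg : StrictMono g) (hgm : ∀ a, g a ≠ j ∧ g a ≠ j') :
    A.det * ((A.submatrix i'.succAbove j'.succAbove).det * (A.submatrix i.succAbove j.succAbove).det
      - (A.submatrix i'.succAbove j.succAbove).det * (A.submatrix i.succAbove j'.succAbove).det)
    = A.det * (A.det * (A.submatrix f g).det) := by
  have hii : i ≠ i' := hi.ne
  have hjj : j ≠ j' := hj.ne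
  set B := adjugate A with hB
  set M : Matrix (Fin (n + 2)) (Fin (n + 2)) S :=
    ((1 : Matrix (Fin (n + 2)) (Fin (n + 2)) S).updateCol j fun r => B r i).updateCol j'
      fun r => B r i' with hM
  set N : Matrix (Fin (n + 2)) (Fin (n + 2)) S :=
    (A.updateCol j (Pi.single i 1)).updateCol j' (Pi.single i' 1) with hN
  -- determinant of M
  have detM : M.det = B j i * B j' i' - B j i' * B j' i := by
    have := DJ.det_two_col M j j' hjj ?_
    · rw [this]
      simp [hM, Matrix.updateCol_self, Matrix.updateCol_ne, hjj, Ne.symm hjj]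
    · intro r c h1 h2
      simp [hM, Matrix.updateCol_ne h1, Matrix.updateCol_ne h2, Matrix.one_apply]
  -- A * M
  have hAM : A * M = (A.updateCol j (A.det • (Pi.single i 1 : Fin (n+2) → S))).updateCol j'
      (A.det • (Pi.single i' 1 : Fin (n+2) → S)) := by
    ext r c
    rcases em (c = j') with rfl | h1
    · rw [Matrix.mul_apply, Matrix.updateCol_self]
      have : ∀ k, M k c = B k i' := fun k => Matrix.updateCol_self ..
      simp_rw [this]
      have : (A * B) r i' = (A.det • (1 : Matrix (Fin (n+2)) (Fin (n+2)) S)) r i' := by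
        rw [Matrix.mul_adjugate]
      rw [Matrix.mul_apply] at this
      rw [this]
      simp [Matrix.one_apply, Pi.single_apply]
    rcases em (c = j) with rfl | h2
    · rw [Matrix.mul_apply, Matrix.updateCol_ne h1, Matrix.updateCol_self]
      have : ∀ k, M k c = B k i := fun k => by
        rw [hM, Matrix.updateCol_ne h1, Matrix.updateCol_self]
      simp_rw [this]
      have : (A * B) r i = (A.det • (1 : Matrix (Fin (n+2)) (Fin (n+2)) S)) r i := by
        rw [Matrix.mul_adjugate]
      rw [Matrix.mul_apply] at this
      rw [this]
      simp [Matrix.one_apply, Pi.single_apply]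
    · rw [Matrix.mul_apply, Matrix.updateCol_ne h1, Matrix.updateCol_ne h2]
      have : ∀ k, M k c = (1 : Matrix (Fin (n+2)) (Fin (n+2)) S) k c := fun k => by
        rw [hM, Matrix.updateCol_ne h1, Matrix.updateCol_ne h2]
      simp_rw [this]
      have h3 : ∑ x, A r x * (1 : Matrix (Fin (n+2)) (Fin (n+2)) S) x c
          = (A * (1 : Matrix (Fin (n+2)) (Fin (n+2)) S)) r c := (Matrix.mul_apply).symm
      rw [h3, Matrix.mul_one]
  -- two expressions of det (A * M)
  have hdetAM : A.det * M.det = A.det * (A.det * N.det) := by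
    rw [← Matrix.det_mul, hAM, Matrix.det_updateCol_smul,
      DJ.updateCol_comm _ hjj, Matrix.det_updateCol_smul,
      DJ.updateCol_comm _ (Ne.symm hjj)]
  -- indices in the small square
  have hilt : (i : ℕ) < n + 1 := lt_of_lt_of_le hi (Nat.lt_succ_iff.mp i'.isLt)
  have hjlt : (j : ℕ) < n + 1 := lt_of_lt_of_le hj (Nat.lt_succ_iff.mp j'.isLt)
  set k : Fin (n + 1) := ⟨i, hilt⟩ with hk
  set k' : Fin (n + 1) := ⟨j, hjlt⟩ with hk'
  have hki : i'.succAbove k = i := by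
    rw [Fin.succAbove_of_castSucc_lt]
    · exact Fin.ext rfl
    · exact hi
  have hkj : j'.succAbove k' = j := by
    rw [Fin.succAbove_of_castSucc_lt]
    · exact Fin.ext rfl
    · exact hj
  -- determinant of N
  have detN : N.det = (-1 : S) ^ ((i : ℕ) + i' + j + j') * (A.submatrix f g).det := by
    rw [hN, DJ.det_updateCol_single, Matrix.adjugate_fin_succ_eq_det_submatrix]
    have h1 : (A.updateCol j (Pi.single i 1)).submatrix i'.succAbove j'.succAbove
        = (A.submatrix i'.succAbove j'.succAbove).updateCol k' (Pi.single k 1) := by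
      have hcol : (fun r : Fin (n+1) => (Pi.single i 1 : Fin (n+2) → S) (i'.succAbove r))
          = (Pi.single k 1 : Fin (n+1) → S) := by
        funext r
        simp only [Pi.single_apply]
        congr 1
        rw [← hki]
        exact propext ⟨fun h => Fin.succAbove_right_injective h, fun h => by rw [h]⟩
      rw [← hkj, DJ.submatrix_updateCol _ _ _ (Fin.succAbove_right_injective) k', hcol]
    rw [h1, DJ.det_updateCol_single, Matrix.adjugate_fin_succ_eq_det_submatrix,
      Matrix.submatrix_submatrix]
    have hfeq : f = i'.succAbove ∘ k.succAbove := by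
      apply DJ.strictMono_unique hii rfl hf hfm
      · exact (Fin.strictMono_succAbove i').comp (Fin.strictMono_succAbove k)
      · intro a
        constructor
        · intro he
          rw [← hki] at he
          exact Fin.succAbove_ne k a (Fin.succAbove_right_injective he)
        · exact Fin.succAbove_ne i' _
    have hgeq : g = j'.succAbove ∘ k'.succAbove := by
      apply DJ.strictMono_unique hjj rfl hg hgm
      · exact (Fin.strictMono_succAbove j').comp (Fin.strictMono_succAbove k')
      · intro a
        constructor
        · intro he
          rw [← hkj] at he
          exact Fin.succAbove_ne k' a (Fin.succAbove_right_injective he)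
        · exact Fin.succAbove_ne j' _
    rw [hfeq, hgeq]
    show ((-1 : S)) ^ ((i' : ℕ) + (j' : ℕ)) * ((-1 : S) ^ ((k : ℕ) + (k' : ℕ)) * _) = _
    have hkv : (k : ℕ) = (i : ℕ) := rfl
    have hkv' : (k' : ℕ) = (j : ℕ) := rfl
    rw [hkv, hkv']
    ring
  -- entries of B as minors
  have hBji : B j i = (-1 : S) ^ ((i : ℕ) + (j : ℕ)) * (A.submatrix i.succAbove j.succAbove).det :=
    Matrix.adjugate_fin_succ_eq_det_submatrix A j i
  have hBj'i' : B j' i' = (-1 : S) ^ ((i' : ℕ) + (j' : ℕ)) * (A.submatrix i'.succAbove j'.succAbove).det :=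
    Matrix.adjugate_fin_succ_eq_det_submatrix A j' i'
  have hBji' : B j i' = (-1 : S) ^ ((i' : ℕ) + (j : ℕ)) * (A.submatrix i'.succAbove j.succAbove).det :=
    Matrix.adjugate_fin_succ_eq_det_submatrix A j i'
  have hBj'i : B j' i = (-1 : S) ^ ((i : ℕ) + (j' : ℕ)) * (A.submatrix i.succAbove j'.succAbove).det :=
    Matrix.adjugate_fin_succ_eq_det_submatrix A j' i
  rw [detM, detN, hBji, hBj'i', hBji', hBj'i] at hdetAM
  have hsq : (-1 : S) ^ ((i : ℕ) + i' + j + j') * (-1 : S) ^ ((i : ℕ) + i' + j + j') = 1 := by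
    rw [← pow_add]
    exact Even.neg_one_pow ⟨(i : ℕ) + i' + j + j', rfl⟩
  linear_combination (-1 : S) ^ ((i : ℕ) + i' + j + j') * hdetAM -
    (A.det * ((A.submatrix i'.succAbove j'.succAbove).det * (A.submatrix i.succAbove j.succAbove).det
      - (A.submatrix i'.succAbove j.succAbove).det * (A.submatrix i.succAbove j'.succAbove).det)
      - A.det * (A.det * (A.submatrix f g).det)) * hsq



/-- Desnanot–Jacobi ("Lewis Carroll") identity.  Here `x` is an
`(n+2) × (n+2)` matrix over a commutative ring; `Fin.succAbove i` is the unique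
strictly monotone map missing `i`, so `x.submatrix i.succAbove j.succAbove` is
the minor `Δ^{i,j}` obtained by deleting row `i` and column `j`, and a strictly
monotone map `f : Fin n → Fin (n+2)` avoiding both `i` and `i'` cuts out the
double-deletion minor `Δ^{ii',jj'}` (its determinant is `1` when `n = 0`). -/
theorem stmt4 {n : ℕ} {R : Type*} [CommRing R]
    (x : Matrix (Fin (n + 2)) (Fin (n + 2)) R)
    (i i' j j' : Fin (n + 2)) (hi : i < i') (hj : j < j')
    (f g : Fin n → Fin (n + 2))
    (hf : StrictMono f) (hfm : ∀ a, f a ≠ i ∧ f a ≠ i')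
    (hg : StrictMono g) (hgm : ∀ a, g a ≠ j ∧ g a ≠ j') :
    (x.submatrix i'.succAbove j'.succAbove).det * (x.submatrix i.succAbove j.succAbove).det
      - (x.submatrix i'.succAbove j.succAbove).det * (x.submatrix i.succAbove j'.succAbove).det
      = x.det * (x.submatrix f g).det := by
  classical
  set A : Matrix (Fin (n + 2)) (Fin (n + 2)) (MvPolynomial (Fin (n + 2) × Fin (n + 2)) ℤ) :=
    Matrix.mvPolynomialX (Fin (n + 2)) (Fin (n + 2)) ℤ with hA
  have key : (A.submatrix i'.succAbove j'.succAbove).det * (A.submatrix i.succAbove j.succAbove).det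
      - (A.submatrix i'.succAbove j.succAbove).det * (A.submatrix i.succAbove j'.succAbove).det
      = A.det * (A.submatrix f g).det := by
    have h := DJ.core A i i' j j' hi hj f g hf hfm hg hgm
    have hd : A.det ≠ 0 := Matrix.det_mvPolynomialX_ne_zero _ ℤ
    exact mul_left_cancel₀ hd h
  set φ : MvPolynomial (Fin (n + 2) × Fin (n + 2)) ℤ →ₐ[ℤ] R :=
    MvPolynomial.aeval (fun p : Fin (n + 2) × Fin (n + 2) => x p.1 p.2) with hφ
  have hx : φ.mapMatrix A = x := Matrix.mvPolynomialX_mapMatrix_aeval ℤ x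
  have hmap := congrArg φ key
  simp only [map_sub, _root_.map_mul, AlgHom.map_det, AlgHom.mapMatrix_apply] at hmap
  simp only [← Matrix.submatrix_map] at hmap
  simp only [← AlgHom.mapMatrix_apply, hx] at hmap
  exact hmap
end

section
/- (Cryer's lemma) If x is an invertible totally nonnegative n×n real matrix, then all leading principal minors Δ_{[1,k],[1,k]}(x), for k = 1,…,n, are strictly positive. -/
/-!
Passing from the leading block of size `m + 1` to the one of size `m`, it suffices to show: if `A`
of size `m + 1` is totally nonnegative with `det A > 0`, its leading principal minor `D` of size `m`
is nonzero. If `D = 0`, Laplace expansion of `det A` along the last column and along the last row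
gives a row `c` and a column `r` such that `P`, the minor without row `c` and the last column, and
`Q`, the minor without the last row and column `r`, are positive. The Desnanot–Jacobi identity
`det A * Y = X * D - P * Q = - P * Q`, where `Y` is the minor without rows `c`, `last` and columns
`r`, `last`, then makes `Y` negative.
-/

open Fin

namespace Matrix

variable {R n : Type*} [CommRing R] [Fintype n] [DecidableEq n]

theorem det_updateCol_updateCol_one {i j : n} (hij : i ≠ j) (u v : n → R) :
    (((1 : Matrix n n R).updateCol i u).updateCol j v).det = u i * v j - u j * v i := by
  let U : Matrix n (Fin 2) R := (of ![u - Pi.single i 1, v - Pi.single j 1])ᵀ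
  let V : Matrix (Fin 2) n R := of ![Pi.single i 1, Pi.single j 1]
  have hUV : ((1 : Matrix n n R).updateCol i u).updateCol j v = 1 + U * V := by
    ext k k'
    simp only [updateCol_apply, add_apply, mul_apply, Fin.sum_univ_two, one_apply, U, V,
      transpose_apply, of_apply, cons_val_zero, cons_val_one, Pi.sub_apply,
      Pi.single_apply]
    by_cases hj : k' = j
    · subst hj; simp [Ne.symm hij]
    · by_cases hi : k' = i
      · subst hi; simp [hj]
      · simp [hi, hj]
  rw [hUV, det_one_add_mul_comm, det_fin_two]
  simp [U, V, hij, Ne.symm hij]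
  ring

theorem det_updateCol_single {k : ℕ} (M : Matrix (Fin (k + 1)) (Fin (k + 1)) R)
    (i j : Fin (k + 1)) :
    (M.updateCol j (Pi.single i 1)).det
      = (-1) ^ (i + j : ℕ) * (M.submatrix i.succAbove j.succAbove).det := by
  rw [← det_transpose, ← updateRow_transpose, ← adjugate_apply,
    adjugate_fin_succ_eq_det_submatrix, ← transpose_submatrix, det_transpose, add_comm]

theorem mulVec_adjugate_col (A : Matrix n n R) (j : n) :
    A *ᵥ A.adjugate.col j = A.det • Pi.single j 1 := by
  rw [← mulVec_single_one, ← cramer_eq_adjugate_mulVec, mulVec_cramer]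

theorem submatrix_castSucc_updateCol_castSucc {m : ℕ} {α : Type*}
    (A : Matrix (Fin (m + 1)) (Fin (m + 1)) α) (j : Fin m) (v : Fin (m + 1) → α) :
    (A.updateCol j.castSucc v).submatrix castSucc castSucc
      = (A.submatrix castSucc castSucc).updateCol j (v ∘ castSucc) := by
  ext a b
  simp [updateCol_apply]

/-- Desnanot–Jacobi identity for the rows `c`, `last` and the columns `r`, `last`. Multiplying `A`
by the identity with columns `r`, `last` replaced by the columns `c`, `last` of `adjugate A` gives
`A` with those columns replaced by `det A` times unit vectors; compare determinants. -/
theorem det_mul_det_submatrix_castSucc_succAbove {m : ℕ}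
    (A : Matrix (Fin (m + 2)) (Fin (m + 2)) R) (hA : IsUnit A.det) (c r : Fin (m + 1)) :
    A.det * (A.submatrix (castSucc ∘ c.succAbove) (castSucc ∘ r.succAbove)).det
      = (A.submatrix c.castSucc.succAbove r.castSucc.succAbove).det
          * (A.submatrix castSucc castSucc).det
        - (A.submatrix c.castSucc.succAbove castSucc).det
          * (A.submatrix castSucc r.castSucc.succAbove).det := by
  set l := last (m + 1)
  set B := A.adjugate
  have hrl : r.castSucc ≠ l := (castSucc_lt_last r).ne
  have hAB : A * ((1 : Matrix _ _ R).updateCol r.castSucc (B.col c.castSucc)).updateCol l (B.col l)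
      = (A.updateCol r.castSucc (A.det • Pi.single c.castSucc 1)).updateCol l
          (A.det • Pi.single l 1) := by
    rw [mul_updateCol, mul_updateCol, mul_one, mulVec_adjugate_col, mulVec_adjugate_col]
  have hv : (A.det • Pi.single c.castSucc 1) ∘ castSucc
      = A.det • (Pi.single c 1 : Fin (m + 1) → R) := by
    ext i
    simp [Pi.single_apply]
  have hdet := congrArg det hAB
  rw [det_mul, det_updateCol_updateCol_one hrl, det_updateCol_smul, det_updateCol_single,
    succAbove_last, submatrix_castSucc_updateCol_castSucc, hv, det_updateCol_smul,
    det_updateCol_single, submatrix_submatrix] at hdet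
  simp only [B, col_apply, adjugate_fin_succ_eq_det_submatrix, l, succAbove_last] at hdet
  replace hdet := hA.mul_left_cancel hdet
  simp only [val_castSucc, val_last] at hdet
  have hll : (-1 : R) ^ ((m + 1) + (m + 1)) = 1 := Even.neg_one_pow ⟨_, rfl⟩
  have hcr :
      (-1 : R) ^ ((c : ℕ) + (m + 1)) * (-1) ^ ((m + 1) + (r : ℕ)) = (-1) ^ ((c : ℕ) + r) := by
    rw [← pow_add, show (c : ℕ) + (m + 1) + ((m + 1) + r) = c + r + 2 * (m + 1) by ring, pow_add,
      pow_mul, neg_one_sq, one_pow, mul_one]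
  have hsq : (-1 : R) ^ ((c : ℕ) + r) * (-1) ^ ((c : ℕ) + r) = 1 := by
    rw [← pow_add]; exact Even.neg_one_pow ⟨_, rfl⟩
  rw [hll] at hdet
  -- `hdet` is the identity multiplied on both sides by the sign `ε`
  set ε : R := (-1) ^ ((c : ℕ) + r)
  set D := (A.submatrix castSucc castSucc).det
  set P := (A.submatrix c.castSucc.succAbove castSucc).det
  set Q := (A.submatrix castSucc r.castSucc.succAbove).det
  set X := (A.submatrix c.castSucc.succAbove r.castSucc.succAbove).det
  set Y := (A.submatrix (castSucc ∘ c.succAbove) (castSucc ∘ r.succAbove)).det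
  linear_combination (-ε) * hdet - ε * P * Q * hcr + (X * D - P * Q - A.det * Y) * hsq

theorem exists_det_submatrix_succAbove_ne_zero_of_col {m : ℕ}
    (A : Matrix (Fin (m + 1)) (Fin (m + 1)) R) (hA : A.det ≠ 0) (j : Fin (m + 1)) :
    ∃ i : Fin (m + 1), (A.submatrix i.succAbove j.succAbove).det ≠ 0 := by
  rw [det_succ_column A j] at hA
  obtain ⟨i, -, hi⟩ := Finset.exists_ne_zero_of_sum_ne_zero hA
  exact ⟨i, right_ne_zero_of_mul hi⟩

theorem exists_det_submatrix_succAbove_ne_zero_of_row {m : ℕ}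
    (A : Matrix (Fin (m + 1)) (Fin (m + 1)) R) (hA : A.det ≠ 0) (i : Fin (m + 1)) :
    ∃ j : Fin (m + 1), (A.submatrix i.succAbove j.succAbove).det ≠ 0 := by
  rw [det_succ_row A i] at hA
  obtain ⟨j, -, hj⟩ := Finset.exists_ne_zero_of_sum_ne_zero hA
  exact ⟨j, right_ne_zero_of_mul hj⟩

end Matrix

namespace TotallyNonneg

variable {n : ℕ} {A : Matrix (Fin n) (Fin n) ℝ}

theorem det_nonneg (hA : TotallyNonneg A) : 0 ≤ A.det := by
  simpa using hA n id id strictMono_id strictMono_id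

theorem submatrix (hA : TotallyNonneg A) {m : ℕ} {f g : Fin m → Fin n} (hf : StrictMono f)
    (hg : StrictMono g) : TotallyNonneg (A.submatrix f g) := fun k r c hr hc => by
  rw [Matrix.submatrix_submatrix]
  exact hA k _ _ (hf.comp hr) (hg.comp hc)

theorem det_submatrix_castSucc_pos {m : ℕ} {A : Matrix (Fin (m + 1)) (Fin (m + 1)) ℝ}
    (hA : TotallyNonneg A) (hdet : A.det ≠ 0) : 0 < (A.submatrix castSucc castSucc).det := by
  refine ((hA.submatrix strictMono_castSucc strictMono_castSucc).det_nonneg).lt_of_ne' ?_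
  intro hD
  obtain _ | m := m
  · simp at hD
  obtain ⟨c', hP⟩ := Matrix.exists_det_submatrix_succAbove_ne_zero_of_col A hdet (last _)
  obtain ⟨r', hQ⟩ := Matrix.exists_det_submatrix_succAbove_ne_zero_of_row A hdet (last _)
  rw [succAbove_last] at hP hQ
  obtain ⟨c, rfl⟩ : ∃ c, castSucc c = c' :=
    exists_castSucc_eq.mpr (by rintro rfl; exact hP (by rwa [succAbove_last]))
  obtain ⟨r, rfl⟩ : ∃ r, castSucc r = r' :=
    exists_castSucc_eq.mpr (by rintro rfl; exact hQ (by rwa [succAbove_last]))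
  have hP_pos := (hA _ _ _ (strictMono_succAbove _) strictMono_castSucc).lt_of_ne' hP
  have hQ_pos := (hA _ _ _ strictMono_castSucc (strictMono_succAbove _)).lt_of_ne' hQ
  have hY := hA _ _ _ (strictMono_castSucc.comp (strictMono_succAbove c))
    (strictMono_castSucc.comp (strictMono_succAbove r))
  have hJ := Matrix.det_mul_det_submatrix_castSucc_succAbove A (isUnit_iff_ne_zero.mpr hdet) c r
  rw [hD, mul_zero, zero_sub] at hJ
  nlinarith [mul_pos hP_pos hQ_pos, hA.det_nonneg.lt_of_ne' hdet]

theorem det_submatrix_castLE_pos (hA : TotallyNonneg A) (hdet : A.det ≠ 0) {k : ℕ}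
    (hk : k ≤ n) : 0 < (A.submatrix (castLE hk) (castLE hk)).det := by
  induction n with
  | zero =>
    obtain rfl := Nat.le_zero.mp hk
    simp
  | succ m ih =>
    obtain rfl | hlt := hk.eq_or_lt
    · simpa using hA.det_nonneg.lt_of_ne' hdet
    · exact ih (hA.submatrix strictMono_castSucc strictMono_castSucc)
        (hA.det_submatrix_castSucc_pos hdet).ne' (Nat.le_of_lt_succ hlt)

end TotallyNonneg

/-- Cryer's lemma: an invertible totally nonnegative matrix has positive
leading principal minors `Δ_{[1,k],[1,k]}`. -/
theorem stmt5 (n : ℕ) (x : Matrix (Fin n) (Fin n) ℝ)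
    (hx : TotallyNonneg x) (hxu : IsUnit x.det) :
    ∀ (k : ℕ) (hk : k ≤ n),
      0 < (x.submatrix (Fin.castLE hk) (Fin.castLE hk)).det :=
  fun _ hk => hx.det_submatrix_castLE_pos hxu.ne_zero hk
end

section
/- A square matrix with nonzero initial minors is uniquely determined by its initial minors: if two n×n matrices have the same initial minors and all these minors are nonzero, then the matrices are equal. -/
/-- The initial minor of `x` with lower-right corner at `(i,j)` (0-indexed):
the solid minor of size `min i j + 1` whose row and column sets are consecutive,
end at row `i` and column `j`, and one of which starts at the first index. -/
def initialMinor {n : ℕ} (x : Matrix (Fin n) (Fin n) ℝ) (i j : Fin n) : ℝ :=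
  (x.submatrix
      (fun a : Fin (min i.val j.val + 1) =>
        (⟨i.val - min i.val j.val + a.val, by
          have := a.isLt; have := i.isLt; have := j.isLt; omega⟩ : Fin n))
      (fun a : Fin (min i.val j.val + 1) =>
        (⟨j.val - min i.val j.val + a.val, by
          have := a.isLt; have := i.isLt; have := j.isLt; omega⟩ : Fin n))).det

lemma initialMinor_eq_det {n : ℕ} (x : Matrix (Fin n) (Fin n) ℝ) (i j : Fin n)
    (s : ℕ) (hs : min i.val j.val = s) :
    initialMinor x i j =
      (x.submatrix
        (fun a : Fin (s + 1) =>
          (⟨i.val - s + a.val, by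
            have := a.isLt; have := i.isLt; have := j.isLt; omega⟩ : Fin n))
        (fun a : Fin (s + 1) =>
          (⟨j.val - s + a.val, by
            have := a.isLt; have := i.isLt; have := j.isLt; omega⟩ : Fin n))).det := by
  subst hs; rfl

lemma det_sub_corner {k : ℕ} (M N : Matrix (Fin (k + 1)) (Fin (k + 1)) ℝ)
    (h : ∀ a b : Fin (k + 1), (a ≠ Fin.last k ∨ b ≠ Fin.last k) → M a b = N a b) :
    M.det - N.det =
      (M (Fin.last k) (Fin.last k) - N (Fin.last k) (Fin.last k)) *
        (M.submatrix Fin.castSucc Fin.castSucc).det := by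
  have hsub : ∀ j : Fin (k + 1),
      N.submatrix (Fin.last k).succAbove j.succAbove =
        M.submatrix (Fin.last k).succAbove j.succAbove := by
    intro j; ext a b
    simp only [Matrix.submatrix_apply]
    exact (h _ _ (Or.inl (by rw [Fin.succAbove_last]; exact (Fin.castSucc_lt_last a).ne))).symm
  rw [Matrix.det_succ_row M (Fin.last k), Matrix.det_succ_row N (Fin.last k),
    ← Finset.sum_sub_distrib]
  rw [Finset.sum_eq_single (Fin.last k)]
  · rw [hsub (Fin.last k)]
    have hsign : ((-1 : ℝ) ^ ((Fin.last k : ℕ) + (Fin.last k : ℕ))) = 1 :=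
      Even.neg_one_pow ⟨k, rfl⟩
    have hcs : (Fin.last k).succAbove = Fin.castSucc := by
      funext a; exact Fin.succAbove_last_apply a
    rw [hsign, hcs]
    ring
  · intro j _ hj
    rw [hsub j, h (Fin.last k) j (Or.inr hj)]
    ring
  · intro hmem
    exact absurd (Finset.mem_univ _) hmem

/-- A square matrix all of whose initial minors are nonzero is uniquely
determined by its initial minors. -/
theorem stmt6 (n : ℕ) (x y : Matrix (Fin n) (Fin n) ℝ)
    (hne : ∀ i j, initialMinor x i j ≠ 0)
    (heq : ∀ i j, initialMinor x i j = initialMinor y i j) :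
    x = y := by
  suffices h : ∀ m, ∀ i j : Fin n, i.val + j.val < m → x i j = y i j by
    ext i j; exact h (i.val + j.val + 1) i j (by omega)
  intro m
  induction m with
  | zero => intro i j h; omega
  | succ m ih =>
    intro i j hij
    cases hs : min i.val j.val with
    | zero =>
      have h0 := heq i j
      rw [initialMinor_eq_det x i j 0 hs, initialMinor_eq_det y i j 0 hs,
        Matrix.det_fin_one, Matrix.det_fin_one] at h0
      simp only [Matrix.submatrix_apply] at h0
      have hi : (⟨i.val - 0 + ((0 : Fin 1) : ℕ), by omega⟩ : Fin n) = i := by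
        ext; simp
      have hj : (⟨j.val - 0 + ((0 : Fin 1) : ℕ), by omega⟩ : Fin n) = j := by
        ext; simp
      rwa [hi, hj] at h0
    | succ t =>
      have hti : t + 1 ≤ i.val := by omega
      have htj : t + 1 ≤ j.val := by omega
      set M := x.submatrix
        (fun a : Fin (t + 1 + 1) =>
          (⟨i.val - (t + 1) + a.val, by have := a.isLt; have := i.isLt; omega⟩ : Fin n))
        (fun a : Fin (t + 1 + 1) =>
          (⟨j.val - (t + 1) + a.val, by have := a.isLt; have := j.isLt; omega⟩ : Fin n))
        with hM
      set N := y.submatrix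
        (fun a : Fin (t + 1 + 1) =>
          (⟨i.val - (t + 1) + a.val, by have := a.isLt; have := i.isLt; omega⟩ : Fin n))
        (fun a : Fin (t + 1 + 1) =>
          (⟨j.val - (t + 1) + a.val, by have := a.isLt; have := j.isLt; omega⟩ : Fin n))
        with hN
      have hMN : ∀ a b : Fin (t + 1 + 1),
          (a ≠ Fin.last (t + 1) ∨ b ≠ Fin.last (t + 1)) → M a b = N a b := by
        intro a b hab
        have hav := a.isLt
        have hbv := b.isLt
        have hab' : a.val ≠ t + 1 ∨ b.val ≠ t + 1 := by
          rcases hab with h | h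
          · exact Or.inl (fun hc => h (Fin.ext hc))
          · exact Or.inr (fun hc => h (Fin.ext hc))
        simp only [hM, hN, Matrix.submatrix_apply]
        exact ih _ _ (by simp only []; omega)
      have hdet : M.det = N.det := by
        rw [← initialMinor_eq_det x i j (t + 1) hs, ← initialMinor_eq_det y i j (t + 1) hs]
        exact heq i j
      have hi1 : i.val - 1 < n := by have := i.isLt; omega
      have hj1 : j.val - 1 < n := by have := j.isLt; omega
      have hD : (M.submatrix Fin.castSucc Fin.castSucc).det =
          initialMinor x ⟨i.val - 1, hi1⟩ ⟨j.val - 1, hj1⟩ := by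
        rw [initialMinor_eq_det x ⟨i.val - 1, hi1⟩ ⟨j.val - 1, hj1⟩ t (by simp; omega)]
        congr 1
        ext a b
        simp only [hM, Matrix.submatrix_apply]
        congr 1 <;> · apply Fin.ext; simp [Fin.coe_castSucc]; omega
      have hDne : (M.submatrix Fin.castSucc Fin.castSucc).det ≠ 0 := by
        rw [hD]; exact hne _ _
      have hkey := det_sub_corner M N hMN
      rw [hdet, sub_self] at hkey
      have hcorner : M (Fin.last (t + 1)) (Fin.last (t + 1)) =
          N (Fin.last (t + 1)) (Fin.last (t + 1)) := by
        rcases mul_eq_zero.mp hkey.symm with h | h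
        · linarith [sub_eq_zero.mp h]
        · exact absurd h hDne
      have hiM : (⟨i.val - (t + 1) + ((Fin.last (t + 1)) : ℕ), by
          have := i.isLt; simp [Fin.val_last]; omega⟩ : Fin n) = i := by
        ext; simp [Fin.val_last]; omega
      have hjM : (⟨j.val - (t + 1) + ((Fin.last (t + 1)) : ℕ), by
          have := j.isLt; simp [Fin.val_last]; omega⟩ : Fin n) = j := by
        ext; simp [Fin.val_last]; omega
      simp only [hM, hN, Matrix.submatrix_apply] at hcorner
      rwa [hiM, hjM] at hcorner
end

section
/- (Gasca–Peña criterion) An n×n real matrix is totally positive if and only if all of its n² initial minors are positive. -/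
open Matrix Equiv Finset

namespace GPaux


variable {n : ℕ}

/-- solid (contiguous) index selection -/
def sol (i K : ℕ) (h : i + K ≤ n) : Fin K → Fin n :=
  fun a => ⟨i + a.val, by have := a.isLt; omega⟩

lemma sol_ext {i i' K : ℕ} (h : i + K ≤ n) (h' : i' + K ≤ n) (hii : i = i') :
    sol (n := n) i K h = sol i' K h' := by subst hii; rfl

lemma sol_strictMono {i K : ℕ} (h : i + K ≤ n) : StrictMono (sol (n := n) i K h) := by
  intro a b hab
  simp only [sol, Fin.lt_def] at *
  omega

lemma sol_comp_succ {i K : ℕ} (h : i + (K+1) ≤ n) (h' : (i+1) + K ≤ n) :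
    sol (n := n) i (K+1) h ∘ Fin.succ = sol (i+1) K h' := by
  funext a; apply Fin.ext; simp only [sol, Function.comp_apply, Fin.val_succ]; omega

lemma sol_comp_castSucc {i K : ℕ} (h : i + (K+1) ≤ n) (h' : i + K ≤ n) :
    sol (n := n) i (K+1) h ∘ Fin.castSucc = sol i K h' := by
  funext a; simp only [sol, Function.comp_apply, Fin.coe_castSucc]

/-- dispersion of an index selection on `Fin (K+1)` -/
def disp {K : ℕ} (ι : Fin (K+1) → Fin n) : ℕ :=
  (ι (Fin.last K)).val - (ι 0).val - K

lemma strictMono_add_le {K : ℕ} {ι : Fin (K+1) → Fin n} (hι : StrictMono ι) :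
    ∀ (d : ℕ) (a b : Fin (K+1)), a.val + d = b.val → (ι a).val + d ≤ (ι b).val := by
  intro d
  induction d with
  | zero => intro a b hab; have : a = b := Fin.ext (by omega); subst this; omega
  | succ d ih =>
    intro a b hab
    have hb : 0 < b.val := by omega
    have hblt : b.val - 1 < K + 1 := by omega
    have h1 := ih a ⟨b.val - 1, hblt⟩ (by simp; omega)
    have h2 : (⟨b.val - 1, hblt⟩ : Fin (K+1)) < b := by show b.val - 1 < b.val; omega
    have := hι h2
    simp only [Fin.lt_def] at this
    omega

lemma eq_sol_of_disp_zero {K : ℕ} {ι : Fin (K+1) → Fin n} (hι : StrictMono ι)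
    (hd : disp ι = 0) (h : (ι 0).val + (K+1) ≤ n) : ι = sol (ι 0).val (K+1) h := by
  funext a
  apply Fin.ext
  have h1 := strictMono_add_le hι a.val 0 a (by simp)
  have h2 := strictMono_add_le hι (K - a.val) a (Fin.last K) (by simp; omega)
  have h3 := strictMono_add_le hι K 0 (Fin.last K) (by simp)
  simp only [disp] at hd
  simp only [sol]
  omega

lemma bound_of_strictMono {K : ℕ} {ι : Fin (K+1) → Fin n} (hι : StrictMono ι) :
    (ι 0).val + (K+1) ≤ n := by
  have h3 := strictMono_add_le hι K 0 (Fin.last K) (by simp)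
  have := (ι (Fin.last K)).isLt
  omega



variable {n : ℕ}

lemma det_updateRow_lincomb {m s : ℕ} (A : Matrix (Fin m) (Fin m) ℝ) (j : Fin m)
    (c : Fin s → ℝ) (v : Fin s → Fin m → ℝ) :
    (A.updateRow j (fun u => ∑ t, c t * v t u)).det
      = ∑ t, c t * (A.updateRow j (v t)).det := by
  have H : ∀ S : Finset (Fin s),
      (A.updateRow j (fun u => ∑ t ∈ S, c t * v t u)).det
        = ∑ t ∈ S, c t * (A.updateRow j (v t)).det := by
    intro S
    induction S using Finset.induction_on with
    | empty =>
      simp only [Finset.sum_empty]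
      exact det_eq_zero_of_row_eq_zero j (by simp)
    | @insert a S ha ih =>
      have : (fun u => ∑ t ∈ insert a S, c t * v t u)
          = (c a • v a) + (fun u => ∑ t ∈ S, c t * v t u) := by
        funext u; simp [Finset.sum_insert ha]
      rw [this, det_updateRow_add, det_updateRow_smul, ih, Finset.sum_insert ha]
  exact H Finset.univ


variable {n : ℕ}

lemma val_succAbove {m : ℕ} (p : Fin (m+1)) (i : Fin m) :
    (p.succAbove i).val = if i.val < p.val then i.val else i.val + 1 := by
  rw [Fin.succAbove]
  split_ifs with h1 h2 h2
  · rfl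
  · exact absurd h1 (by simp [Fin.lt_def]; omega)
  · exact absurd (by simp [Fin.lt_def]; omega : Fin.castSucc i < p) h1
  · rfl

/-- the permutation of `Fin (m+1)` sending `q ↦ last`, fixing everything below `q`,
and shifting everything above `q` down by one. -/
def rot {m : ℕ} (q : Fin (m+1)) : Perm (Fin (m+1)) :=
  (Fin.revPerm : Perm (Fin (m+1))).trans (((q.rev).cycleRange).trans Fin.revPerm)

lemma rot_apply {m : ℕ} (q a : Fin (m+1)) : rot q a = ((q.rev).cycleRange a.rev).rev := rfl

lemma val_rot {m : ℕ} (q a : Fin (m+1)) :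
    (rot q a).val = if a = q then m else if a < q then a.val else a.val - 1 := by
  rw [rot_apply]
  rcases lt_trichotomy a q with h | h | h
  · rw [if_neg h.ne, if_pos h, Fin.cycleRange_of_gt (by rwa [Fin.rev_lt_rev]), Fin.rev_rev]
  · rw [if_pos h, h, Fin.cycleRange_of_eq rfl]
    simp [Fin.val_rev]
  · rw [if_neg h.ne', if_neg (not_lt.mpr h.le)]
    rw [Fin.cycleRange_of_lt (by rwa [Fin.rev_lt_rev])]
    have hane : a.rev ≠ Fin.last m := by
      intro hh
      have : a.rev.val = m := by rw [hh]; rfl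
      simp only [Fin.val_rev] at this
      have hq : q.val < a.val := h
      omega
    have h1 : (a.rev + 1).val = a.rev.val + 1 := Fin.val_add_one_of_lt (Fin.lt_last_iff_ne_last.mpr hane)
    simp only [Fin.val_rev] at *
    omega

lemma sign_rot {m : ℕ} (q : Fin (m+1)) : Perm.sign (rot q) = (-1) ^ (m - q.val) := by
  have : rot q = Fin.revPerm * ((q.rev).cycleRange) * Fin.revPerm := by
    ext a; rfl
  rw [this]
  rw [_root_.map_mul, _root_.map_mul, Fin.sign_cycleRange]
  have h2 : Perm.sign (Fin.revPerm : Perm (Fin (m+1))) * Perm.sign (Fin.revPerm : Perm (Fin (m+1))) = 1 := by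
    rw [← _root_.map_mul]
    simp
  have : (Fin.rev q).val = m - q.val := by simp [Fin.val_rev]
  rw [this]
  calc Perm.sign Fin.revPerm * (-1:ℤˣ) ^ (m - q.val) * Perm.sign Fin.revPerm
      = Perm.sign Fin.revPerm * Perm.sign Fin.revPerm * (-1:ℤˣ) ^ (m - q.val) :=
        mul_right_comm _ _ _
    _ = (-1) ^ (m - q.val) := by rw [h2, one_mul]


variable {n : ℕ}

section forward
variable (x : Matrix (Fin n) (Fin n) ℝ)

lemma star3 (k : ℕ) (r : Fin (k+3) → Fin n)
    (W : Fin (k+2) → Fin n) (e : Fin (k+1) → Fin (k+2)) (pt : Fin (k+1)) :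
    (x.submatrix (r ∘ (Fin.castSucc pt.succ).succAbove) W).det *
      (x.submatrix (r ∘ Fin.castSucc ∘ Fin.succ) (W ∘ e)).det
    = (x.submatrix (r ∘ Fin.succ) W).det *
        (x.submatrix (r ∘ Fin.castSucc ∘ pt.succ.succAbove) (W ∘ e)).det
      + (x.submatrix (r ∘ Fin.castSucc) W).det *
        (x.submatrix (r ∘ Fin.succ ∘ pt.castSucc.succAbove) (W ∘ e)).det := by
  have core : ∀ u : Fin (k+2), ∑ t : Fin (k+3),
      ((-1:ℝ)^(t:ℕ) * (x.submatrix (r ∘ t.succAbove) W).det) * x (r t) (W u) = 0 := by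
    intro u
    have h0 : (x.submatrix r (Fin.cons (W u) W)).det = 0 := by
      refine det_zero_of_column_eq (i := 0) (j := u.succ) (Fin.succ_ne_zero u).symm ?_
      intro a; simp
    rw [det_succ_column_zero] at h0
    rw [← h0]
    refine Finset.sum_congr rfl fun t _ => ?_
    rw [submatrix_submatrix]
    have h1 : (Fin.cons (W u) W ∘ Fin.succ) = W := by funext a; simp
    have h2 : x.submatrix r (Fin.cons (W u) W) t 0 = x (r t) (W u) := by simp
    rw [h1, h2]; ring
  set N : Matrix (Fin (k+1)) (Fin (k+1)) ℝ :=
    x.submatrix (r ∘ Fin.castSucc ∘ Fin.succ) (W ∘ e) with hN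
  have hlin := det_updateRow_lincomb N pt
      (fun t => (-1:ℝ)^(t:ℕ) * (x.submatrix (r ∘ t.succAbove) W).det)
      (fun t u => x (r t) (W (e u)))
  have hz : (N.updateRow pt (fun u => ∑ t : Fin (k+3),
      ((-1:ℝ)^(t:ℕ) * (x.submatrix (r ∘ t.succAbove) W).det) * x (r t) (W (e u)))).det = 0 := by
    have hfun : (fun u : Fin (k+1) => ∑ t : Fin (k+3),
        ((-1:ℝ)^(t:ℕ) * (x.submatrix (r ∘ t.succAbove) W).det) * x (r t) (W (e u)))
        = fun _ => (0:ℝ) := funext fun u => core (e u)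
    rw [hfun]
    exact det_eq_zero_of_row_eq_zero pt (by simp)
  rw [hz] at hlin
  -- evaluate the three kinds of terms
  have hd0 : (N.updateRow pt (fun u => x (r 0) (W (e u)))).det
      = (-1:ℝ)^(pt.val) *
        (x.submatrix (r ∘ Fin.castSucc ∘ pt.succ.succAbove) (W ∘ e)).det := by
    have hmat : N.updateRow pt (fun u => x (r 0) (W (e u)))
        = (x.submatrix (r ∘ Fin.castSucc ∘ pt.succ.succAbove) (W ∘ e)).submatrix
            pt.cycleRange id := by
      ext a b
      simp only [Matrix.submatrix_apply, Function.comp_apply, id_eq]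
      rcases eq_or_ne a pt with h | h
      · rw [h, Matrix.updateRow_self, Fin.cycleRange_of_eq rfl]
        have hidx : Fin.castSucc (pt.succ.succAbove (0 : Fin (k+1))) = (0 : Fin (k+3)) := by
          apply Fin.ext
          simp [val_succAbove]
        rw [hidx]
      · rw [Matrix.updateRow_ne h]
        simp only [hN, Matrix.submatrix_apply, Function.comp_apply]
        rcases lt_or_gt_of_ne h with hlt | hgt
        · have hidx : Fin.castSucc (pt.succ.succAbove (pt.cycleRange a))
              = Fin.castSucc a.succ := by
            apply Fin.ext
            have hc := Fin.coe_cycleRange_of_lt hlt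
            simp only [Fin.coe_castSucc, val_succAbove, Fin.val_succ, hc]
            have : a.val < pt.val := hlt
            split_ifs <;> omega
          rw [hidx]
        · have hidx : Fin.castSucc (pt.succ.succAbove (pt.cycleRange a))
              = Fin.castSucc a.succ := by
            apply Fin.ext
            rw [Fin.cycleRange_of_gt hgt]
            have : pt.val < a.val := hgt
            simp only [Fin.coe_castSucc, val_succAbove, Fin.val_succ]
            split_ifs <;> omega
          rw [hidx]
    rw [hmat, det_permute, Fin.sign_cycleRange]
    norm_num
  have hdlast : (N.updateRow pt (fun u => x (r (Fin.last (k+1)).succ) (W (e u)))).det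
      = (-1:ℝ)^(k - pt.val) *
        (x.submatrix (r ∘ Fin.succ ∘ pt.castSucc.succAbove) (W ∘ e)).det := by
    have hmat : N.updateRow pt (fun u => x (r (Fin.last (k+1)).succ) (W (e u)))
        = (x.submatrix (r ∘ Fin.succ ∘ pt.castSucc.succAbove) (W ∘ e)).submatrix
            (rot pt) id := by
      ext a b
      simp only [Matrix.submatrix_apply, Function.comp_apply, id_eq]
      rcases eq_or_ne a pt with h | h
      · rw [h, Matrix.updateRow_self]
        have hidx : (pt.castSucc.succAbove (rot pt pt)).succ = (Fin.last (k+1)).succ := by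
          apply Fin.ext
          have h1 : (rot pt pt).val = k := by rw [val_rot]; simp
          simp only [Fin.val_succ, val_succAbove, h1, Fin.val_last, Fin.coe_castSucc]
          have := pt.isLt
          split_ifs <;> omega
        rw [hidx]
      · rw [Matrix.updateRow_ne h]
        simp only [hN, Matrix.submatrix_apply, Function.comp_apply]
        have hidx : (pt.castSucc.succAbove (rot pt a)).succ = Fin.castSucc a.succ := by
          apply Fin.ext
          have hne : ¬ (a = pt) := h
          rcases lt_or_gt_of_ne h with hlt | hgt
          · have h1 : (rot pt a).val = a.val := by
              rw [val_rot, if_neg hne, if_pos hlt]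
            simp only [Fin.val_succ, val_succAbove, h1, Fin.coe_castSucc]
            have : a.val < pt.val := hlt
            split_ifs <;> omega
          · have h1 : (rot pt a).val = a.val - 1 := by
              rw [val_rot, if_neg hne, if_neg (not_lt.mpr hgt.le)]
            simp only [Fin.val_succ, val_succAbove, h1, Fin.coe_castSucc]
            have : pt.val < a.val := hgt
            split_ifs <;> omega
        rw [hidx]
    rw [hmat, det_permute, sign_rot]
    norm_num
  have hdmid : ∀ j : Fin (k+1),
      (N.updateRow pt (fun u => x (r ((Fin.castSucc j).succ)) (W (e u)))).det
      = if j = pt then N.det else 0 := by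
    intro j
    have hrow : (fun u => x (r ((Fin.castSucc j).succ)) (W (e u))) = N j := by
      funext u
      simp only [hN, Matrix.submatrix_apply, Function.comp_apply]
      rw [Fin.succ_castSucc]
    rw [hrow]
    rcases eq_or_ne j pt with h | h
    · rw [h, Matrix.updateRow_eq_self, if_pos rfl]
    · rw [if_neg h]
      refine det_zero_of_row_eq (M := N.updateRow pt (N j)) h.symm ?_
      rw [Matrix.updateRow_self, Matrix.updateRow_ne h]
  -- expand the sum
  rw [Fin.sum_univ_succ, Fin.sum_univ_castSucc] at hlin
  rw [hd0, hdlast] at hlin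
  have hmidsum : ∑ j : Fin (k+1),
      ((-1:ℝ)^(((Fin.castSucc j).succ : Fin (k+3)) : ℕ)
        * (x.submatrix (r ∘ ((Fin.castSucc j).succ).succAbove) W).det)
        * (N.updateRow pt (fun u => x (r ((Fin.castSucc j).succ)) (W (e u)))).det
      = ((-1:ℝ)^(pt.val + 1)
        * (x.submatrix (r ∘ ((Fin.castSucc pt).succ).succAbove) W).det) * N.det := by
    rw [Finset.sum_eq_single pt]
    · rw [hdmid, if_pos rfl]
      norm_num
    · intro j _ hj
      rw [hdmid, if_neg hj, mul_zero]
    · intro hmem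
      exact absurd (Finset.mem_univ pt) hmem
  rw [hmidsum] at hlin
  -- now hlin is the three-term identity up to signs
  have hsucc : ((Fin.castSucc pt).succ : Fin (k+3)) = Fin.castSucc pt.succ := Fin.succ_castSucc pt
  rw [hsucc] at hlin
  rw [Fin.succAbove_zero, Fin.succ_last, Fin.succAbove_last] at hlin
  have e1 : (-1:ℝ)^((pt.val)+1) = -((-1:ℝ)^(pt.val)) := by rw [pow_succ]; ring
  have e2 : (-1:ℝ)^((Fin.last (k+1+1) : Fin (k+3)) : ℕ) = (-1:ℝ)^k := by
    have : ((Fin.last (k+1+1) : Fin (k+3)) : ℕ) = k + 2 := rfl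
    rw [this, pow_add]; norm_num
  have e0 : (-1:ℝ)^(((0 : Fin (k+3))) : ℕ) = 1 := by norm_num
  rw [e0, e2] at hlin
  have hple : pt.val ≤ k := by have := pt.isLt; omega
  rcases Nat.even_or_odd pt.val with hp | hp <;> rcases Nat.even_or_odd k with hk | hk
  · rw [hp.neg_one_pow, hk.neg_one_pow,
      (Nat.even_sub hple |>.mpr (by simp [Nat.odd_iff, Nat.even_iff] at hp hk ⊢; omega)).neg_one_pow, e1, hp.neg_one_pow] at hlin
    linarith
  · rw [hp.neg_one_pow, hk.neg_one_pow,
      (Nat.odd_sub hple |>.mpr (by simp [Nat.odd_iff, Nat.even_iff] at hp hk ⊢; omega)).neg_one_pow, e1, hp.neg_one_pow] at hlin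
    linarith
  · rw [hp.neg_one_pow, hk.neg_one_pow,
      (Nat.odd_sub hple |>.mpr (by simp [Nat.odd_iff, Nat.even_iff] at hp hk ⊢; omega)).neg_one_pow, e1, hp.neg_one_pow] at hlin
    linarith
  · rw [hp.neg_one_pow, hk.neg_one_pow,
      (Nat.even_sub hple |>.mpr (by simp [Nat.odd_iff, Nat.even_iff] at hp hk ⊢; omega)).neg_one_pow, e1, hp.neg_one_pow] at hlin
    linarith


lemma dj (k : ℕ) (r c : Fin (k+2) → Fin n) :
    (x.submatrix r c).det *
      (x.submatrix (r ∘ Fin.castSucc ∘ Fin.succ) (c ∘ Fin.castSucc ∘ Fin.succ)).det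
    = (x.submatrix (r ∘ Fin.succ) (c ∘ Fin.succ)).det *
        (x.submatrix (r ∘ Fin.castSucc) (c ∘ Fin.castSucc)).det
      - (x.submatrix (r ∘ Fin.succ) (c ∘ Fin.castSucc)).det *
        (x.submatrix (r ∘ Fin.castSucc) (c ∘ Fin.succ)).det := by
  have core : ∀ u : Fin (k+1), ∑ t : Fin (k+2),
      ((-1:ℝ)^(t:ℕ) * (x.submatrix (r ∘ t.succAbove) (c ∘ Fin.succ)).det)
        * x (r t) (c (Fin.succ u)) = 0 := by
    intro u
    have h0 : (x.submatrix r (Fin.cons (c (Fin.succ u)) (c ∘ Fin.succ))).det = 0 := by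
      refine det_zero_of_column_eq (i := 0) (j := u.succ) (Fin.succ_ne_zero u).symm ?_
      intro a; simp
    rw [det_succ_column_zero] at h0
    rw [← h0]
    refine Finset.sum_congr rfl fun t _ => ?_
    rw [submatrix_submatrix]
    have h1 : (Fin.cons (c (Fin.succ u)) (c ∘ Fin.succ) ∘ Fin.succ) = c ∘ Fin.succ := by
      funext a; simp
    have h2 : x.submatrix r (Fin.cons (c (Fin.succ u)) (c ∘ Fin.succ)) t 0
        = x (r t) (c (Fin.succ u)) := by simp
    rw [h1, h2]; ring
  have hD : ∑ t : Fin (k+2),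
      ((-1:ℝ)^(t:ℕ) * (x.submatrix (r ∘ t.succAbove) (c ∘ Fin.succ)).det) * x (r t) (c 0)
      = (x.submatrix r c).det := by
    rw [det_succ_column_zero (x.submatrix r c)]
    refine Finset.sum_congr rfl fun t _ => ?_
    rw [submatrix_submatrix]
    have h1 : (c ∘ Fin.succ) = (c ∘ Fin.succ) := rfl
    have h2 : x.submatrix r c t 0 = x (r t) (c 0) := by simp
    rw [h2]; ring
  set N : Matrix (Fin (k+1)) (Fin (k+1)) ℝ :=
    x.submatrix (r ∘ Fin.castSucc) (c ∘ Fin.castSucc) with hN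
  have hlin := det_updateRow_lincomb N 0
      (fun t => (-1:ℝ)^(t:ℕ) * (x.submatrix (r ∘ t.succAbove) (c ∘ Fin.succ)).det)
      (fun t u => x (r t) (c (Fin.castSucc u)))
  -- identify the combined row with the single-entry row
  have hcomb : (fun u : Fin (k+1) => ∑ t : Fin (k+2),
      ((-1:ℝ)^(t:ℕ) * (x.submatrix (r ∘ t.succAbove) (c ∘ Fin.succ)).det)
        * x (r t) (c (Fin.castSucc u)))
      = fun u => if u = 0 then (x.submatrix r c).det else 0 := by
    funext u
    rcases eq_or_ne u 0 with h | h
    · subst h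
      rw [if_pos rfl]
      have : c (Fin.castSucc (0 : Fin (k+1))) = c 0 := by
        congr 1
      rw [this, hD]
    · rw [if_neg h]
      obtain ⟨j, rfl⟩ := Fin.eq_succ_of_ne_zero h
      have : c (Fin.castSucc j.succ) = c (Fin.succ j.castSucc) := by
        rw [Fin.succ_castSucc]
      rw [this]
      exact core j.castSucc
  rw [hcomb] at hlin
  -- left side: expand along row 0
  have hleft : (N.updateRow 0 (fun u => if u = 0 then (x.submatrix r c).det else 0)).det
      = (x.submatrix r c).det *
        (x.submatrix (r ∘ Fin.castSucc ∘ Fin.succ) (c ∘ Fin.castSucc ∘ Fin.succ)).det := by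
    rw [det_succ_row_zero]
    rw [Finset.sum_eq_single 0]
    · have hsub : (N.updateRow 0 fun u => if u = 0 then (x.submatrix r c).det else 0).submatrix
          Fin.succ (Fin.succAbove 0)
          = x.submatrix (r ∘ Fin.castSucc ∘ Fin.succ) (c ∘ Fin.castSucc ∘ Fin.succ) := by
        ext a b
        rw [Fin.succAbove_zero]
        simp only [Matrix.submatrix_apply]
        rw [Matrix.updateRow_ne (Fin.succ_ne_zero a)]
        simp [hN]
      rw [hsub]
      simp
    · intro j _ hj
      simp [Matrix.updateRow_self, if_neg hj]
    · intro hmem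
      exact absurd (Finset.mem_univ 0) hmem
  rw [hleft] at hlin
  -- right side: evaluate terms
  rw [Fin.sum_univ_succ, Fin.sum_univ_castSucc] at hlin
  have hd0 : (N.updateRow 0 (fun u => x (r 0) (c (Fin.castSucc u)))).det = N.det := by
    have : (fun u => x (r 0) (c (Fin.castSucc u))) = N 0 := by
      funext u
      simp only [hN, Matrix.submatrix_apply, Function.comp_apply]
      congr 1
    rw [this, Matrix.updateRow_eq_self]
  have hdmid : ∀ j : Fin k,
      (N.updateRow 0 (fun u => x (r (Fin.succ (Fin.castSucc j))) (c (Fin.castSucc u)))).det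
        = 0 := by
    intro j
    have : (fun u => x (r (Fin.succ (Fin.castSucc j))) (c (Fin.castSucc u))) = N j.succ := by
      funext u
      simp only [hN, Matrix.submatrix_apply, Function.comp_apply]
      rw [Fin.succ_castSucc]
    rw [this]
    refine det_zero_of_row_eq (M := N.updateRow 0 (N j.succ)) (Fin.succ_ne_zero j).symm ?_
    rw [Matrix.updateRow_self, Matrix.updateRow_ne (Fin.succ_ne_zero j)]
  have hdlast :
      (N.updateRow 0 (fun u => x (r (Fin.succ (Fin.last k))) (c (Fin.castSucc u)))).det
      = (-1:ℝ)^k * (x.submatrix (r ∘ Fin.succ) (c ∘ Fin.castSucc)).det := by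
    have hmat : N.updateRow 0 (fun u => x (r (Fin.succ (Fin.last k))) (c (Fin.castSucc u)))
        = (x.submatrix (r ∘ Fin.succ) (c ∘ Fin.castSucc)).submatrix
            (rot (0 : Fin (k+1))) id := by
      ext a b
      simp only [Matrix.submatrix_apply, Function.comp_apply, id_eq]
      rcases eq_or_ne a 0 with h | h
      · rw [h, Matrix.updateRow_self]
        have hidx : Fin.succ (rot (0 : Fin (k+1)) 0) = Fin.succ (Fin.last k) := by
          apply Fin.ext
          have h1 : (rot (0 : Fin (k+1)) 0).val = k := by rw [val_rot]; simp
          simp [h1]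
        rw [hidx]
      · rw [Matrix.updateRow_ne h]
        simp only [hN, Matrix.submatrix_apply, Function.comp_apply]
        have hidx : Fin.succ (rot (0 : Fin (k+1)) a) = Fin.castSucc a := by
          apply Fin.ext
          have hpos : 0 < a.val := by
            rcases Nat.eq_zero_or_pos a.val with hz | hz
            · exact absurd (Fin.ext hz : a = 0) h
            · exact hz
          have h1 : (rot (0 : Fin (k+1)) a).val = a.val - 1 := by
            rw [val_rot, if_neg h, if_neg (by simp [Fin.lt_def])]
          simp only [Fin.val_succ, h1, Fin.coe_castSucc]
          omega
        rw [hidx]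
    rw [hmat, det_permute, sign_rot]
    norm_num
  rw [hd0, hdlast] at hlin
  have hmids : ∑ j : Fin k,
      ((-1:ℝ)^((Fin.succ (Fin.castSucc j) : Fin (k+2)) : ℕ)
        * (x.submatrix (r ∘ (Fin.succ (Fin.castSucc j)).succAbove) (c ∘ Fin.succ)).det)
        * (N.updateRow 0
            (fun u => x (r (Fin.succ (Fin.castSucc j))) (c (Fin.castSucc u)))).det = 0 := by
    refine Finset.sum_eq_zero fun j _ => ?_
    rw [hdmid j, mul_zero]
  rw [hmids] at hlin
  rw [Fin.succAbove_zero, Fin.succ_last, Fin.succAbove_last] at hlin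
  have e0 : (-1:ℝ)^(((0 : Fin (k+2))) : ℕ) = 1 := by norm_num
  have hsq : ((-1:ℝ)^k) * ((-1:ℝ)^k) = 1 := by
    rw [← pow_add]
    exact Even.neg_one_pow ⟨k, by ring⟩
  have hL : (-1:ℝ)^((Fin.last k.succ : Fin (k+2)) : ℕ) = -((-1:ℝ)^k) := by
    rw [show ((Fin.last k.succ : Fin (k+2)) : ℕ) = k + 1 from rfl, pow_succ]
    ring
  rw [e0, hL] at hlin
  linear_combination hlin - ((x.submatrix (r ∘ Fin.castSucc) (c ∘ Fin.succ)).det *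
    (x.submatrix (r ∘ Fin.succ) (c ∘ Fin.castSucc)).det) * hsq

end forward

lemma val_succAbove' {m : ℕ} (p : Fin (m+1)) (i : Fin m) :
    (p.succAbove i).val = if i.val < p.val then i.val else i.val + 1 := by
  rw [Fin.succAbove]
  split_ifs with h1 h2 h2
  · rfl
  · exact absurd h1 (by simp [Fin.lt_def]; omega)
  · exact absurd (by simp [Fin.lt_def]; omega : Fin.castSucc i < p) h1
  · rfl

lemma insert_row (k : ℕ) (ι : Fin (k+2) → Fin n) (hι : StrictMono ι)
    (hd : 0 < disp ι) :
    ∃ (r : Fin (k+3) → Fin n) (pt : Fin (k+1)),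
      StrictMono r ∧
      r ∘ (Fin.castSucc pt.succ).succAbove = ι ∧
      disp (r ∘ Fin.succ) < disp ι ∧
      disp (r ∘ Fin.castSucc) < disp ι := by
  -- value function
  set iv : ℕ → ℕ := fun a => if h : a < k+2 then (ι ⟨a, h⟩).val else n + a with hivdef
  have hiv : ∀ j : Fin (k+2), (ι j).val = iv j.val := by
    intro j
    simp only [hivdef, dif_pos j.isLt, Fin.eta]
  have hivm : ∀ a b : ℕ, b < k+2 → a < b → iv a < iv b := by
    intro a b hb hab
    simp only [hivdef, dif_pos hb, dif_pos (by omega : a < k+2)]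
    exact hι (by simp [Fin.lt_def]; omega)
  -- find a gap
  have hgap : ∃ p : Fin (k+1), iv p.val + 1 < iv (p.val + 1) := by
    by_contra hcon
    push_neg at hcon
    have hall : ∀ m : ℕ, m < k+2 → iv m = iv 0 + m := by
      intro m
      induction m with
      | zero => intro _; omega
      | succ m ih =>
        intro hm
        have hs : iv (↑(⟨m, by omega⟩ : Fin (k+1)) : ℕ) + 1 ≥ iv ((⟨m, by omega⟩ : Fin (k+1)).val + 1) :=
          hcon ⟨m, by omega⟩
        have hs' : iv m + 1 ≥ iv (m + 1) := hs
        have hlt := hivm m (m+1) (by omega) (by omega)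
        have := ih (by omega)
        omega
    have h1 := hall (k+1) (by omega)
    have h2 : (ι (Fin.last (k+1))).val = iv (k+1) := hiv _
    have h3 : (ι 0).val = iv 0 := hiv _
    simp only [disp] at hd
    omega
  obtain ⟨p, hp⟩ := hgap
  have hple : p.val ≤ k := by have := p.isLt; omega
  have hivlt : ∀ a : ℕ, a < k+2 → iv a < n := by
    intro a ha
    simp only [hivdef, dif_pos ha]
    exact (ι _).isLt
  have hvn : iv p.val + 1 < n := lt_of_lt_of_le hp (le_of_lt (hivlt _ (by omega)))
  set r : Fin (k+3) → Fin n := fun t =>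
    if h : t.val ≤ p.val then ⟨iv t.val, hivlt _ (by omega)⟩
    else if h2 : t.val = p.val + 1 then ⟨iv p.val + 1, hvn⟩
    else ⟨iv (t.val - 1), hivlt _ (by have := t.isLt; omega)⟩ with hrdef
  have hrval : ∀ t : Fin (k+3), (r t).val =
      if t.val ≤ p.val then iv t.val
      else if t.val = p.val + 1 then iv p.val + 1
      else iv (t.val - 1) := by
    intro t
    simp only [hrdef]
    split_ifs <;> rfl
  have hrmono : StrictMono r := by
    rw [Fin.strictMono_iff_lt_succ]
    intro i
    rw [Fin.lt_def, hrval, hrval]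
    have hA : (Fin.castSucc i).val = i.val := rfl
    have hB : (Fin.succ i).val = i.val + 1 := rfl
    rw [hA, hB]
    have hi := i.isLt
    split_ifs with c1 c2 c3 c4 c5 c6 c7 c8
    · exact hivm _ _ (by omega) (by omega)
    · have hip : i.val = p.val := by omega
      rw [hip]; omega
    · omega
    · omega
    · omega
    · rw [(by omega : i.val + 1 - 1 = p.val + 1)]
      exact hp
    · omega
    · omega
    · rw [(by omega : i.val + 1 - 1 = i.val)]
      exact hivm _ _ (by omega) (by omega)
  have hcomp : r ∘ (Fin.castSucc p.succ).succAbove = ι := by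
    funext j
    apply Fin.ext
    rw [Function.comp_apply, hrval, hiv j]
    have hsv : ((Fin.castSucc p.succ).succAbove j).val
        = if j.val < p.val + 1 then j.val else j.val + 1 := by
      rw [val_succAbove']
      rfl
    have hj := j.isLt
    by_cases h : j.val < p.val + 1
    · have hs1 : ((Fin.castSucc p.succ).succAbove j).val = j.val := by
        rw [hsv, if_pos h]
      rw [hs1, if_pos (by omega)]
    · have hs1 : ((Fin.castSucc p.succ).succAbove j).val = j.val + 1 := by
        rw [hsv, if_neg h]
      rw [hs1, if_neg (by omega), if_neg (by omega)]
      norm_num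
  have h3 : (ι (Fin.last (k+1))).val = iv (k+1) := hiv _
  have h4 : (ι 0).val = iv 0 := hiv _
  have hd' : 0 < iv (k+1) - iv 0 - (k+1) := by
    have hd2 := hd
    simp only [disp, h3, h4] at hd2
    exact hd2
  have hd1 : disp (r ∘ Fin.succ) < disp ι := by
    simp only [disp, Function.comp_apply, h3, h4]
    have hx1 : (Fin.succ (Fin.last (k+1))).val = k+2 := rfl
    have hx2 : (Fin.succ (0 : Fin (k+2))).val = 1 := rfl
    have h1 : (r (Fin.succ (Fin.last (k+1)))).val = iv (k+1) := by
      rw [hrval, hx1, if_neg (by omega), if_neg (by omega)]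
      congr 1
    have h2 : iv 0 < (r (Fin.succ (0 : Fin (k+2)))).val := by
      rw [hrval, hx2]
      by_cases hc : 1 ≤ p.val
      · rw [if_pos hc]
        exact hivm 0 1 (by omega) (by omega)
      · rw [if_neg hc, if_pos (by omega)]
        have hp0 : p.val = 0 := by omega
        rw [hp0]
        omega
    omega
  have hd2 : disp (r ∘ Fin.castSucc) < disp ι := by
    simp only [disp, Function.comp_apply, h3, h4]
    have hx3 : (Fin.castSucc (Fin.last (k+1))).val = k+1 := rfl
    have hx4 : (Fin.castSucc (0 : Fin (k+2))).val = 0 := rfl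
    have h1 : (r (Fin.castSucc (0 : Fin (k+2)))).val = iv 0 := by
      rw [hrval, hx4, if_pos (by omega)]
    have h2 : (r (Fin.castSucc (Fin.last (k+1)))).val < iv (k+1) := by
      rw [hrval, hx3, if_neg (by omega)]
      by_cases h2c : k + 1 = p.val + 1
      · rw [if_pos h2c]
        have hpk : p.val = k := by omega
        rw [hpk] at hp ⊢
        omega
      · rw [if_neg h2c, (by omega : k + 1 - 1 = k)]
        exact hivm k (k+1) (by omega) (by omega)
    omega
  exact ⟨r, p, hrmono, hcomp, hd1, hd2⟩


end GPaux

namespace GPaux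
variable {n : ℕ}

-- ===== gap steps =====

lemma gapRow (x : Matrix (Fin n) (Fin n) ℝ) (k : ℕ) (ι γ : Fin (k+2) → Fin n)
    (hι : StrictMono ι) (hγ : StrictMono γ) (hd : 0 < disp ι)
    (Hsmall : ∀ ι' : Fin (k+2) → Fin n, StrictMono ι' → disp ι' < disp ι →
      0 < (x.submatrix ι' γ).det)
    (Hlow : ∀ (a b : Fin (k+1) → Fin n), StrictMono a → StrictMono b →
      0 < (x.submatrix a b).det) :
    0 < (x.submatrix ι γ).det := by
  obtain ⟨r, pt, hr, hcomp, h1, h2⟩ := insert_row k ι hι hd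
  have id := star3 x k r γ Fin.castSucc pt
  rw [hcomp] at id
  have hGp : 0 < (x.submatrix (r ∘ Fin.castSucc ∘ Fin.succ) (γ ∘ Fin.castSucc)).det :=
    Hlow _ _ (hr.comp (Fin.strictMono_castSucc.comp Fin.strictMono_succ))
      (hγ.comp Fin.strictMono_castSucc)
  have hG0 : 0 < (x.submatrix (r ∘ Fin.castSucc ∘ pt.succ.succAbove) (γ ∘ Fin.castSucc)).det :=
    Hlow _ _ (hr.comp (Fin.strictMono_castSucc.comp (Fin.strictMono_succAbove _)))
      (hγ.comp Fin.strictMono_castSucc)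
  have hGL : 0 < (x.submatrix (r ∘ Fin.succ ∘ pt.castSucc.succAbove) (γ ∘ Fin.castSucc)).det :=
    Hlow _ _ (hr.comp (Fin.strictMono_succ.comp (Fin.strictMono_succAbove _)))
      (hγ.comp Fin.strictMono_castSucc)
  have hm0 : 0 < (x.submatrix (r ∘ Fin.succ) γ).det :=
    Hsmall _ (hr.comp Fin.strictMono_succ) h1
  have hmL : 0 < (x.submatrix (r ∘ Fin.castSucc) γ).det :=
    Hsmall _ (hr.comp Fin.strictMono_castSucc) h2
  have h3 : 0 < (x.submatrix ι γ).det *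
      (x.submatrix (r ∘ Fin.castSucc ∘ Fin.succ) (γ ∘ Fin.castSucc)).det := by
    rw [id]
    exact add_pos (mul_pos hm0 hG0) (mul_pos hmL hGL)
  nlinarith [h3, hGp]

lemma det_sub_transpose (x : Matrix (Fin n) (Fin n) ℝ) {K : ℕ} (a b : Fin K → Fin n) :
    (xᵀ.submatrix a b).det = (x.submatrix b a).det := by
  rw [← Matrix.transpose_submatrix, Matrix.det_transpose]

lemma gapCol (x : Matrix (Fin n) (Fin n) ℝ) (k : ℕ) (ι γ : Fin (k+2) → Fin n)
    (hι : StrictMono ι) (hγ : StrictMono γ) (hd : 0 < disp γ)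
    (Hsmall : ∀ γ' : Fin (k+2) → Fin n, StrictMono γ' → disp γ' < disp γ →
      0 < (x.submatrix ι γ').det)
    (Hlow : ∀ (a b : Fin (k+1) → Fin n), StrictMono a → StrictMono b →
      0 < (x.submatrix a b).det) :
    0 < (x.submatrix ι γ).det := by
  have h := gapRow xᵀ k γ ι hγ hι hd
    (fun γ' hγ' hdlt => by rw [det_sub_transpose]; exact Hsmall γ' hγ' hdlt)
    (fun a b ha hb => by rw [det_sub_transpose]; exact Hlow b a hb ha)
  rw [det_sub_transpose] at h
  exact h

-- ===== Phase 1 : initial minors imply solid minors =====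

lemma det_submatrix_congr (x : Matrix (Fin n) (Fin n) ℝ) {K K' : ℕ} (h : K = K')
    (f g : Fin K → Fin n) (f' g' : Fin K' → Fin n)
    (hf : ∀ a : Fin K, f a = f' (Fin.cast h a)) (hg : ∀ a : Fin K, g a = g' (Fin.cast h a)) :
    (x.submatrix f g).det = (x.submatrix f' g').det := by
  subst h
  have hf' : f = f' := by funext a; rw [hf a]; rfl
  have hg' : g = g' := by funext a; rw [hg a]; rfl
  rw [hf', hg']

lemma initial_base (x : Matrix (Fin n) (Fin n) ℝ)
    (hinit : ∀ i j, 0 < initialMinor x i j)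
    (K i j : ℕ) (hK : 0 < K) (hi : i + K ≤ n) (hj : j + K ≤ n) (hij : i = 0 ∨ j = 0) :
    0 < (x.submatrix (sol i K hi) (sol j K hj)).det := by
  have hiv : i + K - 1 < n := by omega
  have hjv : j + K - 1 < n := by omega
  have h := hinit ⟨i + K - 1, hiv⟩ ⟨j + K - 1, hjv⟩
  have hmin : min (i + K - 1) (j + K - 1) = K - 1 := by
    rcases hij with h0 | h0 <;> omega
  have heq : initialMinor x ⟨i + K - 1, hiv⟩ ⟨j + K - 1, hjv⟩
      = (x.submatrix (sol i K hi) (sol j K hj)).det := by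
    unfold initialMinor
    refine det_submatrix_congr x (by simp only [hmin]; omega) _ _ _ _ ?_ ?_
    · intro a
      apply Fin.ext
      simp only [sol, Fin.coe_cast]
      simp only [hmin]
      omega
    · intro a
      apply Fin.ext
      simp only [sol, Fin.coe_cast]
      simp only [hmin]
      omega
  rw [heq] at h
  exact h

lemma solidPos (x : Matrix (Fin n) (Fin n) ℝ)
    (hinit : ∀ i j, 0 < initialMinor x i j) :
    ∀ (K i j : ℕ) (hi : i + K ≤ n) (hj : j + K ≤ n),
      0 < (x.submatrix (sol i K hi) (sol j K hj)).det := by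
  have main : ∀ (s K i j : ℕ) (hi : i + K ≤ n) (hj : j + K ≤ n), i + j ≤ s →
      0 < (x.submatrix (sol i K hi) (sol j K hj)).det := by
    intro s
    induction s with
    | zero =>
      intro K i j hi hj hs
      rcases Nat.eq_zero_or_pos K with hK | hK
      · subst hK; simp [Matrix.det_fin_zero]
      · exact initial_base x hinit K i j hK hi hj (Or.inl (by omega))
    | succ s ihs =>
      intro K
      induction K using Nat.strong_induction_on with
      | _ K ihK =>
        intro i j hi hj hs
        rcases Nat.eq_zero_or_pos K with hK | hK
        · subst hK; simp [Matrix.det_fin_zero]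
        rcases Nat.eq_zero_or_pos i with hi0 | hi0
        · exact initial_base x hinit K i j hK hi hj (Or.inl hi0)
        rcases Nat.eq_zero_or_pos j with hj0 | hj0
        · exact initial_base x hinit K i j hK hi hj (Or.inr hj0)
        -- interior: use dj
        obtain ⟨k, rfl⟩ : ∃ k, K = k + 1 := ⟨K - 1, by omega⟩
        have hi' : (i-1) + (k+2) ≤ n := by omega
        have hj' : (j-1) + (k+2) ≤ n := by omega
        have id := dj x k (sol (i-1) (k+2) hi') (sol (j-1) (k+2) hj')
        -- rewrite the six minors into sol form
        have c1 : sol (i-1) (k+2) hi' ∘ Fin.succ = sol i (k+1) hi := by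
          funext a; apply Fin.ext; simp only [sol, Function.comp_apply, Fin.val_succ]; omega
        have c2 : sol (i-1) (k+2) hi' ∘ Fin.castSucc = sol (i-1) (k+1) (by omega) := by
          funext a; apply Fin.ext; simp only [sol, Function.comp_apply, Fin.coe_castSucc]
        have c3 : sol (j-1) (k+2) hj' ∘ Fin.succ = sol j (k+1) hj := by
          funext a; apply Fin.ext; simp only [sol, Function.comp_apply, Fin.val_succ]; omega
        have c4 : sol (j-1) (k+2) hj' ∘ Fin.castSucc = sol (j-1) (k+1) (by omega) := by
          funext a; apply Fin.ext; simp only [sol, Function.comp_apply, Fin.coe_castSucc]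
        have c5 : sol (i-1) (k+2) hi' ∘ Fin.castSucc ∘ Fin.succ = sol i k (by omega) := by
          funext a; apply Fin.ext
          simp only [sol, Function.comp_apply, Fin.coe_castSucc, Fin.val_succ]; omega
        have c6 : sol (j-1) (k+2) hj' ∘ Fin.castSucc ∘ Fin.succ = sol j k (by omega) := by
          funext a; apply Fin.ext
          simp only [sol, Function.comp_apply, Fin.coe_castSucc, Fin.val_succ]; omega
        rw [c1, c2, c3, c4, c5, c6] at id
        -- positivity of ingredients
        have hB : 0 < (x.submatrix (sol (i-1) (k+2) hi') (sol (j-1) (k+2) hj')).det :=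
          ihs (k+2) (i-1) (j-1) hi' hj' (by omega)
        have hInner : 0 < (x.submatrix (sol i k (by omega)) (sol j k (by omega))).det :=
          ihK k (by omega) i j (by omega) (by omega) (by omega)
        have hA2 : 0 < (x.submatrix (sol (i-1) (k+1) (by omega)) (sol (j-1) (k+1) (by omega))).det :=
          ihs (k+1) (i-1) (j-1) (by omega) (by omega) (by omega)
        have hA3 : 0 < (x.submatrix (sol i (k+1) hi) (sol (j-1) (k+1) (by omega))).det :=
          ihs (k+1) i (j-1) (by omega) (by omega) (by omega)
        have hA4 : 0 < (x.submatrix (sol (i-1) (k+1) (by omega)) (sol j (k+1) hj)).det :=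
          ihs (k+1) (i-1) j (by omega) (by omega) (by omega)
        -- id : B * inner = T * A2 - A3 * A4, so T * A2 = B*inner + A3*A4
        have hTpos : 0 < (x.submatrix (sol i (k+1) hi) (sol j (k+1) hj)).det *
            (x.submatrix (sol (i-1) (k+1) (by omega)) (sol (j-1) (k+1) (by omega))).det := by
          nlinarith [id, hB, hInner, hA3, hA4]
        nlinarith [hTpos, hA2]
  intro K i j hi hj
  exact main (i + j) K i j hi hj le_rfl

-- ===== Phase 2 : solid minors imply all minors =====

lemma allPos (x : Matrix (Fin n) (Fin n) ℝ)
    (hsolid : ∀ (K i j : ℕ) (hi : i + K ≤ n) (hj : j + K ≤ n),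
      0 < (x.submatrix (sol i K hi) (sol j K hj)).det) :
    ∀ (K : ℕ) (ι γ : Fin K → Fin n), StrictMono ι → StrictMono γ →
      0 < (x.submatrix ι γ).det := by
  intro K
  induction K using Nat.strong_induction_on with
  | _ K ihK =>
    rcases Nat.eq_zero_or_pos K with hK | hK
    · subst hK
      intro ι γ _ _
      simp [Matrix.det_fin_zero]
    obtain ⟨K', rfl⟩ : ∃ K', K = K' + 1 := ⟨K - 1, by omega⟩
    have main : ∀ (μ : ℕ) (ι γ : Fin (K'+1) → Fin n), StrictMono ι → StrictMono γ →
        disp ι + disp γ ≤ μ → 0 < (x.submatrix ι γ).det := by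
      intro μ
      induction μ with
      | zero =>
        intro ι γ hι hγ hle
        have hbι := bound_of_strictMono hι
        have hbγ := bound_of_strictMono hγ
        rw [eq_sol_of_disp_zero hι (by omega) hbι, eq_sol_of_disp_zero hγ (by omega) hbγ]
        exact hsolid _ _ _ _ _
      | succ μ ihμ =>
        intro ι γ hι hγ hle
        have hK'pos : K' = 0 → disp ι = 0 ∧ disp γ = 0 := by
          rintro rfl
          constructor <;> simp [disp]
        by_cases hdγ : 0 < disp γ
        · obtain ⟨k, rfl⟩ : ∃ k, K' = k + 1 := by
            refine ⟨K' - 1, ?_⟩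
            rcases Nat.eq_zero_or_pos K' with h0 | h0
            · exact absurd (hK'pos h0).2 (by omega)
            · omega
          exact gapCol x k ι γ hι hγ hdγ
            (fun γ' hγ' hdlt => ihμ ι γ' hι hγ' (by omega))
            (fun a b ha hb => ihK (k+1) (by omega) a b ha hb)
        · by_cases hdι : 0 < disp ι
          · obtain ⟨k, rfl⟩ : ∃ k, K' = k + 1 := by
              refine ⟨K' - 1, ?_⟩
              rcases Nat.eq_zero_or_pos K' with h0 | h0
              · exact absurd (hK'pos h0).1 (by omega)
              · omega
            exact gapRow x k ι γ hι hγ hdι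
              (fun ι' hι' hdlt => ihμ ι' γ hι' hγ (by omega))
              (fun a b ha hb => ihK (k+1) (by omega) a b ha hb)
          · exact ihμ ι γ hι hγ (by omega)
    intro ι γ hι hγ
    exact main (disp ι + disp γ) ι γ hι hγ le_rfl

end GPaux

/-- Gasca–Peña criterion: a square matrix is totally positive iff all its `n²`
initial minors are positive. -/
theorem stmt7 (n : ℕ) (x : Matrix (Fin n) (Fin n) ℝ) :
    TotallyPositive x ↔ ∀ i j, 0 < initialMinor x i j := by
  constructor
  · intro h i j
    unfold initialMinor
    refine h _ _ _ ?_ ?_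
    · intro a b hab
      simp only [Fin.lt_def] at *
      omega
    · intro a b hab
      simp only [Fin.lt_def] at *
      omega
  · intro hinit k r c hr hc
    exact GPaux.allPos x (GPaux.solidPos x hinit) k r c hr hc
end

section
/- (Fekete-type implication) If all solid minors of an n×n real matrix are positive, then the matrix is totally positive. -/
/-!
Fekete's argument: induct on the size of a minor and, for a fixed size, on the total spread
(last index minus first index) of its rows and columns. If both index sets are consecutive the
minor is solid. Otherwise, after transposing, the rows `r` skip some index `x`. For the rows
`s = r ∪ {x}` the three-term Plücker relation writes `det y[r, c]` times a positive smaller minor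
as a sum of two products of minors, each either smaller or on rows of smaller spread, hence
positive by induction.
-/

namespace Matrix

variable {R : Type*} [CommRing R]

theorem det_submatrix_insertNth {α β : Type*} {m : ℕ} (A : Matrix α β R) (p : Fin (m + 1))
    (x : α) (g : Fin m → α) (c : Fin (m + 1) → β) :
    (A.submatrix (p.insertNth x g) c).det =
      (-1) ^ (p : ℕ) * (A.submatrix (Fin.cons x g) c).det := by
  rw [← Fin.cons_comp_cycleRange, ← c.comp_id, ← submatrix_submatrix, det_permute,
    Fin.sign_cycleRange, Function.comp_id]
  push_cast
  rfl

theorem sum_neg_one_pow_mul_det_submatrix_succAbove_smul {k : ℕ}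
    (A : Matrix (Fin (k + 1)) (Fin k) R) :
    ∑ t : Fin (k + 1), ((-1) ^ (t : ℕ) * (A.submatrix t.succAbove id).det) • A t = 0 := by
  ext j
  set B : Matrix (Fin (k + 1)) (Fin (k + 1)) R := of fun i => Fin.cons (A i j) (A i)
  have hB : ∀ t : Fin (k + 1), B.submatrix t.succAbove Fin.succ = A.submatrix t.succAbove id :=
    fun t => rfl
  have hzero : B.det = 0 := det_zero_of_column_eq (Fin.succ_ne_zero j).symm fun i => by simp [B]
  rw [det_succ_column_zero] at hzero
  simpa [hB, B, mul_right_comm _ (A _ j)] using hzero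

theorem sum_neg_one_pow_mul_det_submatrix_succAbove_mul_det_updateRow {k : ℕ} {ι : Type*}
    [Fintype ι] [DecidableEq ι] (A : Matrix (Fin (k + 1)) (Fin k) R) (M : Matrix ι ι R)
    (i : ι) (d : ι → Fin k) :
    ∑ t : Fin (k + 1), (-1) ^ (t : ℕ) * (A.submatrix t.succAbove id).det *
      (M.updateRow i fun l => A t (d l)).det = 0 := by
  have hrow : ∑ t : Fin (k + 1), ((-1) ^ (t : ℕ) * (A.submatrix t.succAbove id).det) •
      (fun l => A t (d l)) = 0 := by
    ext l
    simpa using congrFun (sum_neg_one_pow_mul_det_submatrix_succAbove_smul A) (d l)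
  have hlin := (detRowAlternating : (ι → R) [⋀^ι]→ₗ[R] R).map_update_sum Finset.univ i
    (fun t : Fin (k + 1) => ((-1) ^ (t : ℕ) * (A.submatrix t.succAbove id).det) •
      fun l => A t (d l)) M
  change (M.updateRow i _).det = ∑ t, (M.updateRow i _).det at hlin
  simp only [hrow, det_updateRow_smul] at hlin
  rw [← hlin]
  exact det_eq_zero_of_row_eq_zero i fun j => by simp

/-- The short Plücker relation for the rows `0 < a < last` of an `(m + 3) × (m + 2)` matrix, with
`a = i + 1`; the second factors omit column `0`. -/
theorem det_mul_det_add_det_mul_det {m : ℕ} (A : Matrix (Fin (m + 3)) (Fin (m + 2)) R)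
    (i : Fin (m + 1)) :
    (A.submatrix Fin.succ id).det *
        (A.submatrix (fun j => (i.succ.succAbove j).castSucc) Fin.succ).det +
      (A.submatrix Fin.castSucc id).det *
        (A.submatrix (fun j => (i.castSucc.succAbove j).succ) Fin.succ).det =
      (A.submatrix i.castSucc.succ.succAbove id).det *
        (A.submatrix (fun j => j.castSucc.succ) Fin.succ).det := by
  set g : Fin m → Fin (m + 3) := fun j => (i.succAbove j).castSucc.succ
  have hupdate : ∀ t, (A.submatrix (Fin.cons 0 g) Fin.succ).updateRow 0 (fun l => A t l.succ) =
      A.submatrix (Fin.cons t g) Fin.succ := by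
    intro t; ext j l
    cases j using Fin.cases <;> simp
  -- The functional `v ↦ det [v; rows g]` kills every row of `A` in `g`, so only the rows `0`, `a`
  -- and `last` survive in the alternating sum.
  have hsum := sum_neg_one_pow_mul_det_submatrix_succAbove_mul_det_updateRow A
    (A.submatrix (Fin.cons 0 g) Fin.succ) 0 Fin.succ
  simp only [hupdate] at hsum
  rw [Fin.sum_univ_succ, Fin.sum_univ_castSucc, Fin.sum_univ_succAbove _ i] at hsum
  have hvanish : ∀ j, (A.submatrix (Fin.cons (i.succAbove j).castSucc.succ g) Fin.succ).det = 0 :=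
    fun j => det_zero_of_row_eq (Fin.succ_ne_zero j).symm (by ext; simp [g])
  have hrows₀ : (Fin.cons 0 g : Fin (m + 1) → Fin (m + 3)) =
      fun j => (i.succ.succAbove j).castSucc := by
    funext j
    cases j using Fin.cases <;> simp [g]
  have hrowsₐ : (i.insertNth i.castSucc.succ g : Fin (m + 1) → Fin (m + 3)) =
      fun j => j.castSucc.succ :=
    Fin.insertNth_eq_iff.2 ⟨rfl, rfl⟩
  have hrowsₗ : ((Fin.last m).insertNth (Fin.last (m + 2)) g : Fin (m + 1) → Fin (m + 3)) =
      fun j => (i.castSucc.succAbove j).succ := by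
    refine Fin.insertNth_eq_iff.2 ⟨by simp, funext fun j => ?_⟩
    rw [Fin.removeNth_apply, Fin.succAbove_last, Fin.castSucc_succAbove_castSucc]
  rw [← hrows₀, ← hrowsₐ, ← hrowsₗ, det_submatrix_insertNth, det_submatrix_insertNth]
  simp only [hvanish, mul_zero, Finset.sum_const_zero, add_zero, Fin.val_zero, pow_zero, one_mul,
    Fin.succAbove_zero, Fin.val_succ, Fin.val_castSucc, Fin.succ_last, Fin.succAbove_last,
    Fin.val_last, Nat.succ_eq_add_one] at hsum ⊢
  linear_combination hsum

end Matrix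

namespace Fekete

open Matrix

variable {p q : ℕ}

def spread {k : ℕ} (r : Fin (k + 1) → Fin p) : ℕ := r (Fin.last k) - r 0

lemma spread_insertNth {m : ℕ} (r : Fin (m + 2) → Fin p) (i : Fin (m + 1)) (x : Fin p) :
    spread (i.castSucc.succ.insertNth x r) = spread r := by
  have h0 : i.castSucc.succ.succAbove 0 = 0 := Fin.succAbove_ne_zero_zero (Fin.succ_ne_zero _)
  have hl : i.castSucc.succ.succAbove (Fin.last (m + 1)) = Fin.last (m + 2) :=
    Fin.succAbove_ne_last_last (by simp [Fin.ext_iff]; omega)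
  rw [spread, spread, ← h0, ← hl, Fin.insertNth_apply_succAbove, Fin.insertNth_apply_succAbove]

lemma spread_comp_succ_lt {k : ℕ} {s : Fin (k + 2) → Fin p} (hs : StrictMono s) :
    spread (s ∘ Fin.succ) < spread s := by
  have h0 : s 0 < s 1 := hs Fin.zero_lt_one
  have h1 : s 1 ≤ s (Fin.last (k + 1)) := hs.monotone (Fin.le_last _)
  simp only [spread, Function.comp_apply, Fin.succ_last, Fin.succ_zero_eq_one, Nat.succ_eq_add_one]
  omega

lemma spread_comp_castSucc_lt {k : ℕ} {s : Fin (k + 2) → Fin p} (hs : StrictMono s) :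
    spread (s ∘ Fin.castSucc) < spread s := by
  have h0 : s 0 ≤ s (Fin.last k).castSucc := hs.monotone (Fin.zero_le _)
  have h1 : s (Fin.last k).castSucc < s (Fin.last (k + 1)) := hs (Fin.castSucc_lt_last _)
  simp only [spread, Function.comp_apply, Fin.castSucc_zero]
  omega

def IsConsecutive {k : ℕ} (r : Fin (k + 1) → Fin p) : Prop :=
  ∀ i : Fin k, (r i.succ : ℕ) = r i.castSucc + 1

lemma isConsecutive_or_exists_gap {k : ℕ} {r : Fin (k + 1) → Fin p} (hr : StrictMono r) :
    IsConsecutive r ∨ ∃ i : Fin k, (r i.castSucc : ℕ) + 1 < r i.succ := by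
  refine or_iff_not_imp_right.2 fun hgap i => ?_
  have : r i.castSucc < r i.succ := hr i.castSucc_lt_succ
  push Not at hgap
  have := hgap i
  omega

lemma IsConsecutive.exists_eq_castLE_natAdd {k : ℕ} {r : Fin (k + 1) → Fin p}
    (hr : IsConsecutive r) :
    ∃ h : (r 0 : ℕ) + (k + 1) ≤ p, r = Fin.castLE h ∘ Fin.natAdd (r 0) := by
  have hval : ∀ j, (r j : ℕ) = r 0 + j := by
    intro j
    induction j using Fin.induction with
    | zero => rfl
    | succ j ih => rw [hr j, ih]; rfl
  have hlast := (r (Fin.last k)).is_lt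
  rw [hval, Fin.val_last] at hlast
  exact ⟨by omega, funext fun j => Fin.ext (hval j)⟩

variable {R : Type*} [CommRing R] [LinearOrder R]

def SolidMinorsPos (y : Matrix (Fin p) (Fin q) R) : Prop :=
  ∀ (k r₀ c₀ : ℕ) (hr : r₀ + (k + 1) ≤ p) (hc : c₀ + (k + 1) ≤ q),
    0 < (y.submatrix (Fin.castLE hr ∘ Fin.natAdd r₀) (Fin.castLE hc ∘ Fin.natAdd c₀)).det

theorem det_submatrix_pos_of_gap [IsStrictOrderedRing R] (y : Matrix (Fin p) (Fin q) R) {m : ℕ}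
    {r : Fin (m + 2) → Fin p} {c : Fin (m + 2) → Fin q} (hr : StrictMono r) (hc : StrictMono c)
    {i : Fin (m + 1)} (hi : (r i.castSucc : ℕ) + 1 < r i.succ)
    (hsmaller : ∀ (r' : Fin (m + 1) → Fin p) (c' : Fin (m + 1) → Fin q), StrictMono r' →
      StrictMono c' → 0 < (y.submatrix r' c').det)
    (hnarrower : ∀ r' : Fin (m + 2) → Fin p, StrictMono r' → spread r' < spread r →
      0 < (y.submatrix r' c).det) :
    0 < (y.submatrix r c).det := by
  have hx : (r i.castSucc : ℕ) + 1 < p := by have := (r i.succ).is_lt; omega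
  set x : Fin p := ⟨r i.castSucc + 1, hx⟩
  set s : Fin (m + 3) → Fin p := i.castSucc.succ.insertNth x r
  have hs : StrictMono s :=
    Fin.strictMono_insertNth hr i x (by simp [Fin.lt_def, x]) (by simpa [Fin.lt_def, x] using hi)
  have hsr : s ∘ i.castSucc.succ.succAbove = r :=
    Fin.removeNth_insertNth (α := fun _ => Fin p) _ _ _
  have key := det_mul_det_add_det_mul_det (y.submatrix s c) i
  simp only [submatrix_submatrix, Function.comp_id, hsr] at key
  have hc' := hc.comp Fin.strictMono_succ
  have hD₀ := hnarrower _ (hs.comp Fin.strictMono_succ)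
    ((spread_comp_succ_lt hs).trans_eq (spread_insertNth r i x))
  have hDₗ := hnarrower _ (hs.comp Fin.strictMono_castSucc)
    ((spread_comp_castSucc_lt hs).trans_eq (spread_insertNth r i x))
  have hE₀ := hsmaller _ _
    (hs.comp (Fin.strictMono_castSucc.comp (Fin.strictMono_succAbove i.succ))) hc'
  have hEₐ := hsmaller _ _ (hs.comp (Fin.strictMono_succ.comp Fin.strictMono_castSucc)) hc'
  have hEₗ := hsmaller _ _
    (hs.comp (Fin.strictMono_succ.comp (Fin.strictMono_succAbove i.castSucc))) hc'
  have hprod := (add_pos (mul_pos hD₀ hE₀) (mul_pos hDₗ hEₗ)).trans_eq key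
  exact (pos_iff_pos_of_mul_pos hprod).2 hEₐ

theorem SolidMinorsPos.det_submatrix_pos_of_isConsecutive {y : Matrix (Fin p) (Fin q) R}
    (hy : SolidMinorsPos y) {k : ℕ} {r : Fin (k + 1) → Fin p} {c : Fin (k + 1) → Fin q}
    (hr : IsConsecutive r) (hc : IsConsecutive c) : 0 < (y.submatrix r c).det := by
  obtain ⟨hr₀, hr⟩ := hr.exists_eq_castLE_natAdd
  obtain ⟨hc₀, hc⟩ := hc.exists_eq_castLE_natAdd
  rw [hr, hc]
  exact hy k _ _ hr₀ hc₀

theorem SolidMinorsPos.det_submatrix_pos [IsStrictOrderedRing R] {y : Matrix (Fin p) (Fin q) R}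
    (hy : SolidMinorsPos y) (k : ℕ) (r : Fin (k + 1) → Fin p) (c : Fin (k + 1) → Fin q)
    (hr : StrictMono r) (hc : StrictMono c) : 0 < (y.submatrix r c).det := by
  induction k with
  | zero => exact hy.det_submatrix_pos_of_isConsecutive (fun i => i.elim0) (fun i => i.elim0)
  | succ m ih =>
    induction hN : spread r + spread c using Nat.strong_induction_on generalizing r c with
    | _ N IH =>
      rcases isConsecutive_or_exists_gap hr with hr' | ⟨i, hi⟩
      · rcases isConsecutive_or_exists_gap hc with hc' | ⟨i, hi⟩
        · exact hy.det_submatrix_pos_of_isConsecutive hr' hc'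
        · rw [← det_transpose, transpose_submatrix]
          refine det_submatrix_pos_of_gap yᵀ hc hr hi (fun c' r' hc' hr' => ?_)
            (fun c' hc' hlt => ?_)
          · rw [← transpose_submatrix, det_transpose]
            exact ih r' c' hr' hc'
          · rw [← transpose_submatrix, det_transpose]
            exact IH _ (by omega) r c' hr hc' rfl
      · exact det_submatrix_pos_of_gap y hr hc hi ih
          (fun r' hr' hlt => IH _ (by omega) r' c hr' hc rfl)

end Fekete

/-- Fekete's criterion: if all solid minors (those with consecutive row set and
consecutive column set) of a square matrix are positive, it is totally positive. -/
theorem stmt8 (n : ℕ) (x : Matrix (Fin n) (Fin n) ℝ)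
    (hsolid : ∀ (k r0 c0 : ℕ), 1 ≤ k → ∀ (hr : r0 + k ≤ n) (hc : c0 + k ≤ n),
      0 < (x.submatrix
            (fun a : Fin k => (⟨r0 + a.val, by have := a.isLt; omega⟩ : Fin n))
            (fun a : Fin k => (⟨c0 + a.val, by have := a.isLt; omega⟩ : Fin n))).det) :
    TotallyPositive x := by
  have hx : Fekete.SolidMinorsPos x := fun k r₀ c₀ hr hc =>
    hsolid (k + 1) r₀ c₀ k.succ_pos hr hc
  rintro (_ | k) r c hr hc
  · simp
  · exact hx.det_submatrix_pos k r c hr hc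
end

section
/- For 2×2 matrices: [[1,t1],[0,1]]·[[t2,0],[0,t3]]·[[1,0],[t4,1]] = [[1,0],[t1',1]]·[[t2',0],[0,t3']]·[[1,t4'],[0,1]], where T = t2 + t1·t3·t4, t1' = t3·t4/T, t2' = T, t3' = t2·t3/T, t4' = t1·t3/T, valid whenever t2, t3 are nonzero and T ≠ 0. -/
/-!
Both sides multiply out to `[[T, t₁t₃], [t₃t₄, t₃]]` with `T = t₂ + t₁t₃t₄`: the left side directly,
the right side after clearing the denominator `T`, using `t₃t₄ · t₁t₃ + t₂t₃ = t₃ T`.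
-/

namespace Matrix

variable {R : Type*} [CommRing R]

theorem upper_mul_diagonal_mul_lower (a b c d : R) :
    !![1, a; 0, 1] * !![b, 0; 0, c] * !![1, 0; d, 1] = !![b + a * c * d, a * c; c * d, c] := by
  ext i j
  fin_cases i <;> fin_cases j <;> simp [mul_apply, Fin.sum_univ_two]

theorem lower_mul_diagonal_mul_upper (x t y z : R) :
    !![1, 0; x, 1] * !![t, 0; 0, y] * !![1, z; 0, 1] = !![t, t * z; x * t, x * t * z + y] := by
  ext i j
  fin_cases i <;> fin_cases j <;> simp [mul_apply, Fin.sum_univ_two]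

theorem upper_mul_diagonal_mul_lower_eq_lower_mul_diagonal_mul_upper {K : Type*} [Field K]
    (a b c d : K) (hT : b + a * c * d ≠ 0) :
    !![1, a; 0, 1] * !![b, 0; 0, c] * !![1, 0; d, 1] =
      !![1, 0; c * d / (b + a * c * d), 1] *
        !![b + a * c * d, 0; 0, b * c / (b + a * c * d)] *
        !![1, a * c / (b + a * c * d); 0, 1] := by
  rw [upper_mul_diagonal_mul_lower, lower_mul_diagonal_mul_upper]
  have hx : c * d / (b + a * c * d) * (b + a * c * d) = c * d := div_mul_cancel₀ _ hT
  have hz : (b + a * c * d) * (a * c / (b + a * c * d)) = a * c := mul_div_cancel₀ _ hT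
  have hy : c * d * (a * c / (b + a * c * d)) + b * c / (b + a * c * d) = c := by
    rw [mul_div_assoc', ← add_div, div_eq_iff hT]
    ring
  rw [hx, hz, hy]

end Matrix

theorem stmt10_general (t1 t2 t3 t4 : ℝ)
    (hT : t2 + t1 * t3 * t4 ≠ 0) :
    !![(1:ℝ), t1; 0, 1] * !![t2, 0; 0, t3] * !![1, 0; t4, 1] =
      !![(1:ℝ), 0; t3 * t4 / (t2 + t1 * t3 * t4), 1] *
        !![t2 + t1 * t3 * t4, 0; 0, t2 * t3 / (t2 + t1 * t3 * t4)] *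
        !![1, t1 * t3 / (t2 + t1 * t3 * t4); 0, 1] :=
  Matrix.upper_mul_diagonal_mul_lower_eq_lower_mul_diagonal_mul_upper t1 t2 t3 t4 hT

/-- The basic commutation relation between elementary `2 × 2` Jacobi matrices:
`[[1,t₁],[0,1]]·[[t₂,0],[0,t₃]]·[[1,0],[t₄,1]]
  = [[1,0],[t₁',1]]·[[t₂',0],[0,t₃']]·[[1,t₄'],[0,1]]`
with `T = t₂ + t₁t₃t₄`, `t₁' = t₃t₄/T`, `t₂' = T`, `t₃' = t₂t₃/T`,
`t₄' = t₁t₃/T`. -/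
theorem stmt10 (t1 t2 t3 t4 : ℝ) (ht2 : t2 ≠ 0) (ht3 : t3 ≠ 0)
    (hT : t2 + t1 * t3 * t4 ≠ 0) :
    !![(1:ℝ), t1; 0, 1] * !![t2, 0; 0, t3] * !![1, 0; t4, 1] =
      !![(1:ℝ), 0; t3 * t4 / (t2 + t1 * t3 * t4), 1] *
        !![t2 + t1 * t3 * t4, 0; 0, t2 * t3 / (t2 + t1 * t3 * t4)] *
        !![1, t1 * t3 / (t2 + t1 * t3 * t4); 0, 1] :=
  stmt10_general t1 t2 t3 t4 hT
end

section
/- The infinite lower-triangular Pascal matrix, with (i,j) entry equal to the binomial coefficient C(i,j) (rows and columns indexed from 0), is totally nonnegative: every minor of every finite square submatrix is nonnegative. -/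
open Finset Equiv Matrix BigOperators

theorem strictMono_eq_of_image_eq {k n : ℕ} {s s' : Fin k → Fin n}
    (hs : StrictMono s) (hs' : StrictMono s')
    (h : Finset.image s Finset.univ = Finset.image s' Finset.univ) : s = s' := by
  have ht : (Finset.image s Finset.univ).card = k := by
    rw [Finset.card_image_of_injective _ hs.injective, Finset.card_univ, Fintype.card_fin]
  have h1 := Finset.orderEmbOfFin_unique ht (f := s)
    (fun x => Finset.mem_image_of_mem _ (Finset.mem_univ x)) hs
  have h2 := Finset.orderEmbOfFin_unique ht (f := s')
    (fun x => h ▸ Finset.mem_image_of_mem _ (Finset.mem_univ x)) hs'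
  rw [h1, h2]

open scoped Classical in
theorem myCauchyBinet {k n : ℕ} (A : Matrix (Fin k) (Fin n) ℝ) (B : Matrix (Fin n) (Fin k) ℝ) :
    (A * B).det = ∑ s ∈ Finset.univ.filter (fun s : Fin k → Fin n => StrictMono s),
      (A.submatrix id s).det * (B.submatrix s id).det := by
  have step1 : (A * B).det
      = ∑ p : Fin k → Fin n, (∏ i, B (p i) i) * (A.submatrix id p).det := by
    have : (A * B).det = ∑ p : Fin k → Fin n, ∑ σ : Perm (Fin k),
        (Equiv.Perm.sign σ : ℝ) * ∏ i, A (σ i) (p i) * B (p i) i := by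
      simp only [det_apply', mul_apply, Finset.prod_univ_sum, Finset.mul_sum,
        Fintype.piFinset_univ]
      rw [Finset.sum_comm]
    rw [this]
    refine Finset.sum_congr rfl fun p _ => ?_
    rw [det_apply', Finset.mul_sum]
    refine Finset.sum_congr rfl fun σ _ => ?_
    simp only [submatrix_apply, id_eq]
    rw [Finset.prod_mul_distrib]
    ring
  have step2 : (A * B).det = ∑ p ∈ Finset.univ.filter
      (fun p : Fin k → Fin n => Function.Injective p),
      (∏ i, B (p i) i) * (A.submatrix id p).det := by
    rw [step1]
    refine (Finset.sum_subset (Finset.filter_subset _ _) fun p _ hp => ?_).symm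
    simp only [Finset.mem_filter, Finset.mem_univ, true_and] at hp
    rw [Function.not_injective_iff] at hp
    obtain ⟨i, j, hij, hne⟩ := hp
    have : (A.submatrix id p).det = 0 := by
      refine Matrix.det_zero_of_column_eq hne fun x => ?_
      simp [hij]
    rw [this, mul_zero]
  have step3 : ∑ p ∈ Finset.univ.filter
      (fun p : Fin k → Fin n => Function.Injective p),
      (∏ i, B (p i) i) * (A.submatrix id p).det
      = ∑ q ∈ (Finset.univ.filter (fun s : Fin k → Fin n => StrictMono s)) ×ˢ
          (Finset.univ : Finset (Perm (Fin k))),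
        (∏ i, B (q.1 (q.2 i)) i) * (A.submatrix id (q.1 ∘ q.2)).det := by
    refine (Finset.sum_bij (fun q _ => q.1 ∘ q.2) ?_ ?_ ?_ ?_).symm
    · rintro ⟨s, σ⟩ hq
      simp only [Finset.mem_product, Finset.mem_filter, Finset.mem_univ, true_and] at hq
      simp only [Finset.mem_filter, Finset.mem_univ, true_and]
      exact hq.1.injective.comp σ.injective
    · rintro ⟨s, σ⟩ hq ⟨s', σ'⟩ hq' heq
      simp only [Finset.mem_product, Finset.mem_filter, Finset.mem_univ, true_and,
        and_true] at hq hq'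
      have heq' : s ∘ σ = s' ∘ σ' := heq
      have himg : Finset.image s Finset.univ = Finset.image s' Finset.univ := by
        have h1 : Finset.image (s ∘ σ) Finset.univ = Finset.image s Finset.univ := by
          rw [← Finset.image_image]
          congr 1
          exact Finset.image_univ_equiv σ
        have h2 : Finset.image (s' ∘ σ') Finset.univ = Finset.image s' Finset.univ := by
          rw [← Finset.image_image]
          congr 1
          exact Finset.image_univ_equiv σ'
        rw [← h1, ← h2, heq']
      have hs : s = s' := strictMono_eq_of_image_eq hq hq' himg
      subst hs
      have hσ : σ = σ' :=
        Equiv.coe_fn_injective (funext fun i => hq.injective (congrFun heq' i))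
      rw [hσ]
    · intro p hp
      simp only [Finset.mem_filter, Finset.mem_univ, true_and] at hp
      set t := Finset.image p Finset.univ with ht_def
      have ht : t.card = k := by
        rw [ht_def, Finset.card_image_of_injective _ hp, Finset.card_univ, Fintype.card_fin]
      set s : Fin k → Fin n := fun i => t.orderEmbOfFin ht i with hs_def
      have hmem : ∀ i, p i ∈ t := fun i => Finset.mem_image_of_mem _ (Finset.mem_univ i)
      set g : Fin k → Fin k := fun i => (t.orderIsoOfFin ht).symm ⟨p i, hmem i⟩ with hg_def
      have hginj : Function.Injective g := by
        intro i j hij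
        have : (⟨p i, hmem i⟩ : {x // x ∈ t}) = ⟨p j, hmem j⟩ :=
          (t.orderIsoOfFin ht).symm.injective hij
        exact hp (Subtype.ext_iff.mp this)
      have hgbij : Function.Bijective g := (Finite.injective_iff_bijective).mp hginj
      refine ⟨⟨s, Equiv.ofBijective g hgbij⟩, ?_, ?_⟩
      · simp only [Finset.mem_product, Finset.mem_filter, Finset.mem_univ, true_and, and_true]
        exact (t.orderEmbOfFin ht).strictMono
      · funext i
        show ((t.orderIsoOfFin ht) ((t.orderIsoOfFin ht).symm ⟨p i, hmem i⟩) : Fin n) = p i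
        rw [OrderIso.apply_symm_apply]
    · rintro ⟨s, σ⟩ hq
      rfl
  have step4 : ∀ s : Fin k → Fin n, StrictMono s →
      ∑ σ : Perm (Fin k), (∏ i, B (s (σ i)) i) * (A.submatrix id (s ∘ σ)).det
        = (A.submatrix id s).det * (B.submatrix s id).det := by
    intro s hs
    have : ∀ σ : Perm (Fin k), (A.submatrix id (s ∘ σ)).det
        = (Equiv.Perm.sign σ : ℝ) * (A.submatrix id s).det := by
      intro σ
      have : A.submatrix id (s ∘ σ) = (A.submatrix id s).submatrix id σ := rfl
      rw [this, Matrix.det_permute' σ (A.submatrix id s)]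
    simp only [this]
    rw [det_apply' (B.submatrix s id), Finset.mul_sum]
    refine Finset.sum_congr rfl fun σ _ => ?_
    simp only [submatrix_apply, id_eq]
    ring
  rw [step2, step3, Finset.sum_product]
  refine Finset.sum_congr rfl fun s hs => ?_
  simp only [Finset.mem_filter, Finset.mem_univ, true_and] at hs
  exact step4 s hs


theorem bidiag_minor_nonneg : ∀ (k : ℕ) (s c : Fin k → ℕ), StrictMono s → StrictMono c →
    0 ≤ (Matrix.of fun i j : Fin k =>
      if c j = s i ∨ c j = s i + 1 then (1:ℝ) else 0).det := by
  intro k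
  induction k with
  | zero => intro s c _ _; simp [Matrix.det_fin_zero]
  | succ m ih =>
    intro s c hs hc
    rcases lt_or_ge (c 0) (s 0) with h1 | h1
    · -- column 0 is zero
      rw [Matrix.det_eq_zero_of_column_eq_zero 0]
      · intro i
        have hi : s 0 ≤ s i := hs.monotone (Fin.zero_le i)
        have : ¬ (c 0 = s i ∨ c 0 = s i + 1) := by omega
        simp [this]
    rcases lt_or_ge (s 0 + 1) (c 0) with h2 | h2
    · -- row 0 is zero
      rw [Matrix.det_eq_zero_of_row_eq_zero 0]
      · intro j
        have hj : c 0 ≤ c j := hc.monotone (Fin.zero_le j)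
        have : ¬ (c j = s 0 ∨ c j = s 0 + 1) := by omega
        simp [this]
    -- now s 0 ≤ c 0 ≤ s 0 + 1
    rcases Nat.eq_or_lt_of_le h1 with hcs | hcs
    · -- c 0 = s 0 : expand along column 0
      rw [Matrix.det_succ_column_zero]
      rw [Finset.sum_eq_single 0]
      · have h00 : (Matrix.of fun i j : Fin (m+1) =>
            if c j = s i ∨ c j = s i + 1 then (1:ℝ) else 0) 0 0 = 1 := by
          simp [Matrix.of_apply, ← hcs]
        rw [h00]
        simp only [Fin.val_zero, pow_zero, one_mul, Fin.succAbove_zero]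
        have : ((Matrix.of fun i j : Fin (m+1) =>
            if c j = s i ∨ c j = s i + 1 then (1:ℝ) else 0).submatrix Fin.succ Fin.succ)
            = Matrix.of fun i j : Fin m =>
              if c (Fin.succ j) = s (Fin.succ i) ∨ c (Fin.succ j) = s (Fin.succ i) + 1
              then (1:ℝ) else 0 := rfl
        rw [this]
        exact ih _ _ (hs.comp Fin.strictMono_succ) (hc.comp Fin.strictMono_succ)
      · intro i _ hi
        have hlt : s 0 < s i := hs (Fin.pos_iff_ne_zero.mpr hi)
        have : ¬ (c 0 = s i ∨ c 0 = s i + 1) := by omega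
        simp [this]
      · intro h; exact absurd (Finset.mem_univ _) h
    · -- c 0 = s 0 + 1 : expand along row 0
      have hcs' : c 0 = s 0 + 1 := by omega
      rw [Matrix.det_succ_row_zero]
      rw [Finset.sum_eq_single 0]
      · have h00 : (Matrix.of fun i j : Fin (m+1) =>
            if c j = s i ∨ c j = s i + 1 then (1:ℝ) else 0) 0 0 = 1 := by
          simp [Matrix.of_apply, hcs']
        rw [h00]
        simp only [Fin.val_zero, pow_zero, one_mul, Fin.succAbove_zero]
        have : ((Matrix.of fun i j : Fin (m+1) =>
            if c j = s i ∨ c j = s i + 1 then (1:ℝ) else 0).submatrix Fin.succ Fin.succ)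
            = Matrix.of fun i j : Fin m =>
              if c (Fin.succ j) = s (Fin.succ i) ∨ c (Fin.succ j) = s (Fin.succ i) + 1
              then (1:ℝ) else 0 := rfl
        rw [this]
        exact ih _ _ (hs.comp Fin.strictMono_succ) (hc.comp Fin.strictMono_succ)
      · intro j _ hj
        have hlt : c 0 < c j := hc (Fin.pos_iff_ne_zero.mpr hj)
        have : ¬ (c j = s 0 ∨ c j = s 0 + 1) := by omega
        simp [this]
      · intro h; exact absurd (Finset.mem_univ _) h


theorem pascal_sum (a N c : ℕ) (hc : c ≤ N) :
    (∑ t ∈ Finset.range (N+1), (a.choose t : ℝ) * (if c = t ∨ c = t + 1 then (1:ℝ) else 0))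
      = ((a+1).choose c : ℝ) := by
  have hsplit : ∀ t : ℕ, (if c = t ∨ c = t + 1 then (1:ℝ) else 0)
      = (if c = t then (1:ℝ) else 0) + (if c = t + 1 then (1:ℝ) else 0) := by
    intro t
    by_cases h1 : c = t <;> by_cases h2 : c = t + 1 <;> first | omega | simp [h1, h2]
  simp only [hsplit, mul_add, Finset.sum_add_distrib, mul_ite, mul_one, mul_zero]
  have hsum1 : (∑ t ∈ Finset.range (N+1), if c = t then (a.choose t : ℝ) else 0)
      = (a.choose c : ℝ) := by
    rw [Finset.sum_ite_eq]
    simp [Nat.lt_succ_of_le hc]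
  rw [hsum1]
  rcases c with _ | d
  · have : (∑ t ∈ Finset.range (N+1), if 0 = t + 1 then (a.choose t : ℝ) else 0) = 0 := by
      apply Finset.sum_eq_zero; intro t _; simp
    rw [this]; simp
  · have : (∑ t ∈ Finset.range (N+1), if d + 1 = t + 1 then (a.choose t : ℝ) else 0)
        = (a.choose d : ℝ) := by
      have : ∀ t : ℕ, (if d + 1 = t + 1 then (a.choose t : ℝ) else 0)
          = (if d = t then (a.choose t : ℝ) else 0) := by
        intro t; by_cases h : d = t <;> simp [h] <;> omega
      simp only [this]
      rw [Finset.sum_ite_eq]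
      simp [Nat.lt_succ_of_le (le_trans (Nat.le_succ d) hc)]
    rw [this, Nat.choose_succ_succ' a d]
    push_cast
    ring

theorem pascal_minor_nonneg :
    ∀ (n k : ℕ) (r c : Fin k → ℕ), (∑ i, (r i + 1)) ≤ n → StrictMono r → StrictMono c →
      0 ≤ (Matrix.of fun a b : Fin k => ((r a).choose (c b) : ℝ)).det := by
  intro n
  induction n using Nat.strong_induction_on with
  | _ n ih =>
  intro k r c hn hr hc
  match k with
  | 0 => simp [Matrix.det_fin_zero]
  | (m+1) =>
    have htot : (m+1 : ℕ) ≤ ∑ i, (r i + 1) := by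
      calc (m+1 : ℕ) = ∑ _i : Fin (m+1), 1 := by simp
        _ ≤ ∑ i, (r i + 1) := Finset.sum_le_sum fun i _ => by omega
    rcases Nat.eq_zero_or_pos (r 0) with hr0 | hr0
    · rcases Nat.eq_zero_or_pos (c 0) with hc0 | hc0
      · -- r 0 = 0, c 0 = 0 : row 0 = e_0, expand
        rw [Matrix.det_succ_row_zero, Finset.sum_eq_single 0]
        · have h00 : (Matrix.of fun a b : Fin (m+1) => ((r a).choose (c b) : ℝ)) 0 0 = 1 := by
            simp [Matrix.of_apply, hr0, hc0]
          rw [h00]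
          simp only [Fin.val_zero, pow_zero, one_mul, Fin.succAbove_zero]
          have hre : ((Matrix.of fun a b : Fin (m+1) => ((r a).choose (c b) : ℝ)).submatrix
              Fin.succ Fin.succ)
              = Matrix.of fun a b : Fin m => ((r (Fin.succ a)).choose (c (Fin.succ b)) : ℝ) := rfl
          rw [hre]
          have hsum : (∑ i : Fin m, (r (Fin.succ i) + 1)) ≤ n - 1 := by
            have := hn
            rw [Fin.sum_univ_succ] at this
            omega
          exact ih (n-1) (by omega) m _ _ hsum (hr.comp Fin.strictMono_succ)
            (hc.comp Fin.strictMono_succ)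
        · intro j _ hj
          have hlt : c 0 < c j := hc (Fin.pos_iff_ne_zero.mpr hj)
          have : (r 0).choose (c j) = 0 := Nat.choose_eq_zero_of_lt (by omega)
          simp [Matrix.of_apply, this]
        · intro h; exact absurd (Finset.mem_univ _) h
      · -- r 0 = 0, c 0 ≥ 1 : row 0 zero
        rw [Matrix.det_eq_zero_of_row_eq_zero 0]
        intro j
        have hj : c 0 ≤ c j := hc.monotone (Fin.zero_le j)
        have : (r 0).choose (c j) = 0 := Nat.choose_eq_zero_of_lt (by omega)
        simp [Matrix.of_apply, this]
    · -- all rows ≥ 1 : factor through Pascal recurrence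
      have hr1 : ∀ i, 1 ≤ r i := fun i => le_trans hr0 (hr.monotone (Fin.zero_le i))
      set N := c (Fin.last m) with hN
      have hfact : (Matrix.of fun a b : Fin (m+1) => ((r a).choose (c b) : ℝ))
          = (Matrix.of fun (i : Fin (m+1)) (t : Fin (N+1)) => (((r i - 1).choose (t:ℕ)) : ℝ))
            * (Matrix.of fun (t : Fin (N+1)) (j : Fin (m+1)) =>
                if c j = (t:ℕ) ∨ c j = (t:ℕ) + 1 then (1:ℝ) else 0) := by
        ext i j
        rw [Matrix.mul_apply]
        have hcj : c j ≤ N := hc.monotone (Fin.le_last j)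
        have hps := pascal_sum (r i - 1) N (c j) hcj
        have hcast : (∑ t : Fin (N+1), (((r i - 1).choose (t:ℕ)) : ℝ) *
            (if c j = (t:ℕ) ∨ c j = (t:ℕ) + 1 then (1:ℝ) else 0))
            = ∑ t ∈ Finset.range (N+1), ((r i - 1).choose t : ℝ) *
              (if c j = t ∨ c j = t + 1 then (1:ℝ) else 0) :=
          Fin.sum_univ_eq_sum_range
            (fun t => ((r i - 1).choose t : ℝ) * (if c j = t ∨ c j = t + 1 then (1:ℝ) else 0))
            (N+1)
        simp only [Matrix.of_apply]
        rw [hcast, hps, Nat.sub_add_cancel (hr1 i)]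
      rw [hfact, myCauchyBinet]
      apply Finset.sum_nonneg
      intro s hs
      simp only [Finset.mem_filter, Finset.mem_univ, true_and] at hs
      apply mul_nonneg
      · have hre : ((Matrix.of fun (i : Fin (m+1)) (t : Fin (N+1)) =>
            (((r i - 1).choose (t:ℕ)) : ℝ)).submatrix id s)
            = Matrix.of fun a b : Fin (m+1) => (((r a - 1).choose ((s b : ℕ))) : ℝ) := rfl
        rw [hre]
        have hsub : StrictMono (fun i => r i - 1) := by
          intro a b hab
          have h1 := hr hab
          have := hr1 a
          simp only
          omega
        have hsval : StrictMono (fun j : Fin (m+1) => ((s j : ℕ))) := fun a b hab => hs hab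
        have hsum : (∑ i : Fin (m+1), (r i - 1 + 1)) ≤ ∑ i, r i := by
          apply Finset.sum_le_sum; intro i _; have := hr1 i; omega
        have hlt : (∑ i : Fin (m+1), r i) < n := by
          have : (∑ i, (r i + 1)) = (∑ i, r i) + (m+1) := by
            rw [Finset.sum_add_distrib]; simp
          omega
        exact ih (∑ i, r i) hlt (m+1) _ _ (le_trans hsum (le_refl _)) hsub hsval
      · have hre : ((Matrix.of fun (t : Fin (N+1)) (j : Fin (m+1)) =>
            if c j = (t:ℕ) ∨ c j = (t:ℕ) + 1 then (1:ℝ) else 0).submatrix s id)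
            = Matrix.of (fun i j : Fin (m+1) =>
              if c j = ((s i : ℕ)) ∨ c j = ((s i : ℕ)) + 1 then (1:ℝ) else 0) := rfl
        rw [hre]
        exact bidiag_minor_nonneg (m+1) (fun i => (s i : ℕ)) c
          (fun a b hab => hs hab) hc

/-- The infinite Pascal matrix `(C(i,j))_{i,j ≥ 0}` is totally nonnegative:
every minor of every finite square submatrix is nonnegative. -/
theorem stmt13 :
    ∀ (k : ℕ) (r c : Fin k → ℕ), StrictMono r → StrictMono c →
      0 ≤ (Matrix.of fun a b : Fin k => ((r a).choose (c b) : ℝ)).det := by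
  intro k r c hr hc
  exact pascal_minor_nonneg (∑ i, (r i + 1)) k r c (le_refl _) hr hc
end

section
/- Every term of a Somos-5 sequence is a rational function with nonnegative coefficients (a subtraction-free rational expression) in the first five terms: concretely, defining a_{n+5} = (a_{n+1}·a_{n+4} + a_{n+2}·a_{n+3})/a_n in the field of rational functions ℚ(a_1,…,a_5), each a_n is a ratio of two polynomials in a_1,…,a_5 with nonnegative coefficients. -/
open MvPolynomial

private def NN (p : MvPolynomial (Fin 5) ℚ) : Prop := ∀ d, 0 ≤ p.coeff d

private lemma NN.mul {p q : MvPolynomial (Fin 5) ℚ} (hp : NN p) (hq : NN q) :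
    NN (p * q) := by
  intro d
  rw [MvPolynomial.coeff_mul]
  exact Finset.sum_nonneg fun x _ => mul_nonneg (hp _) (hq _)

private lemma NN.add {p q : MvPolynomial (Fin 5) ℚ} (hp : NN p) (hq : NN q) :
    NN (p + q) := fun d => by
  rw [MvPolynomial.coeff_add]; exact add_nonneg (hp d) (hq d)

private lemma NN.X (i : Fin 5) : NN (MvPolynomial.X i) := by
  intro d
  rw [MvPolynomial.coeff_X']
  split <;> norm_num

private lemma NN.one : NN 1 := by
  intro d
  rw [MvPolynomial.coeff_one]
  split <;> norm_num

private lemma NN.add_ne_zero {p q : MvPolynomial (Fin 5) ℚ} (hp : NN p) (hq : NN q)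
    (hp0 : p ≠ 0) : p + q ≠ 0 := by
  obtain ⟨d, hd⟩ := MvPolynomial.ne_zero_iff.mp hp0
  refine MvPolynomial.ne_zero_iff.mpr ⟨d, ?_⟩
  rw [MvPolynomial.coeff_add]
  have hpd : 0 < p.coeff d := lt_of_le_of_ne (hp d) (Ne.symm hd)
  exact (add_pos_of_pos_of_nonneg hpd (hq d)).ne'

set_option maxHeartbeats 2000000 in
/-- Laurentness/positivity for Somos-5: in the field of rational functions
`ℚ(a₁,…,a₅)` (the fraction field of `MvPolynomial (Fin 5) ℚ`), the sequence
defined by `aₙ = Xₙ` for `n < 5` and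
`a_{n+5} = (a_{n+1} a_{n+4} + a_{n+2} a_{n+3}) / a_n` has all of its terms
expressible as ratios of polynomials in `a₁,…,a₅` with nonnegative
coefficients. -/
theorem stmt16 (a : ℕ → FractionRing (MvPolynomial (Fin 5) ℚ))
    (hinit : ∀ i : Fin 5,
      a i = algebraMap (MvPolynomial (Fin 5) ℚ) _ (MvPolynomial.X i))
    (hrec : ∀ n, a (n + 5) = (a (n + 1) * a (n + 4) + a (n + 2) * a (n + 3)) / a n) :
    ∀ n, ∃ p q : MvPolynomial (Fin 5) ℚ,
      (∀ d, 0 ≤ p.coeff d) ∧ (∀ d, 0 ≤ q.coeff d) ∧ q ≠ 0 ∧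
      a n = algebraMap (MvPolynomial (Fin 5) ℚ) _ p /
              algebraMap (MvPolynomial (Fin 5) ℚ) _ q := by
  let R := MvPolynomial (Fin 5) ℚ
  let K := FractionRing R
  let f : R →+* K := algebraMap R K
  have hinj : Function.Injective f := IsFractionRing.injective R K
  have hne : ∀ {x : R}, x ≠ 0 → f x ≠ 0 := fun hx =>
    (map_ne_zero_iff f hinj).mpr hx
  have base : ∀ i : Fin 5, ∃ p q : R, NN p ∧ NN q ∧ p ≠ 0 ∧ q ≠ 0 ∧
      a i = f p / f q := by
    intro i
    exact ⟨MvPolynomial.X i, 1, NN.X i, NN.one, MvPolynomial.X_ne_zero i,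
      one_ne_zero, by rw [map_one, div_one]; exact hinit i⟩
  have key : ∀ n, ∃ p q : R, NN p ∧ NN q ∧ p ≠ 0 ∧ q ≠ 0 ∧ a n = f p / f q := by
    intro n
    induction n using Nat.strong_induction_on with
    | _ n ih =>
      match n with
      | 0 => exact base 0
      | 1 => exact base 1
      | 2 => exact base 2
      | 3 => exact base 3
      | 4 => exact base 4
      | (m + 5) =>
        obtain ⟨p0, q0, hp0, hq0, hp0', hq0', h0⟩ := ih m (by omega)
        obtain ⟨p1, q1, hp1, hq1, hp1', hq1', h1⟩ := ih (m+1) (by omega)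
        obtain ⟨p2, q2, hp2, hq2, hp2', hq2', h2⟩ := ih (m+2) (by omega)
        obtain ⟨p3, q3, hp3, hq3, hp3', hq3', h3⟩ := ih (m+3) (by omega)
        obtain ⟨p4, q4, hp4, hq4, hp4', hq4', h4⟩ := ih (m+4) (by omega)
        refine ⟨(p1 * p4 * (q2 * q3) + p2 * p3 * (q1 * q4)) * q0,
                p0 * (q1 * (q2 * (q3 * q4))), ?_, ?_, ?_, ?_, ?_⟩
        · exact (((hp1.mul hp4).mul (hq2.mul hq3)).add
            ((hp2.mul hp3).mul (hq1.mul hq4))).mul hq0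
        · exact hp0.mul (hq1.mul (hq2.mul (hq3.mul hq4)))
        · exact mul_ne_zero
            (NN.add_ne_zero ((hp1.mul hp4).mul (hq2.mul hq3))
              ((hp2.mul hp3).mul (hq1.mul hq4))
              (mul_ne_zero (mul_ne_zero hp1' hp4') (mul_ne_zero hq2' hq3'))) hq0'
        · exact mul_ne_zero hp0' (mul_ne_zero hq1' (mul_ne_zero hq2'
            (mul_ne_zero hq3' hq4')))
        · rw [hrec m, h0, h1, h2, h3, h4]
          have e0p := hne hp0'; have e0 := hne hq0'
          have e1 := hne hq1'; have e2 := hne hq2'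
          have e3 := hne hq3'; have e4 := hne hq4'
          simp only [map_mul, map_add]
          rw [div_mul_div_comm, div_mul_div_comm,
            div_add_div _ _ (mul_ne_zero e1 e4) (mul_ne_zero e2 e3),
            div_div_div_eq, div_eq_div_iff
              (mul_ne_zero (mul_ne_zero (mul_ne_zero e1 e4) (mul_ne_zero e2 e3)) e0p)
              (mul_ne_zero e0p (mul_ne_zero e1 (mul_ne_zero e2 (mul_ne_zero e3 e4))))]
          ring
  intro n
  obtain ⟨p, q, hp, hq, _, hq', h⟩ := key n
  exact ⟨p, q, hp, hq, hq', h⟩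
end

section
/- If w is a word of length n−1 containing each of the symbols 1,2,…,n−1 exactly once, then the concatenation of n−1 copies of w contains, as a subword, a reduced word for the longest element w₀ of the symmetric group S_n (i.e., a word j_1,…,j_{n(n−1)/2} with s_{j_1}···s_{j_{n(n−1)/2}} = w₀). -/
/-- The adjacent transposition `s_h = (h, h+1)` of `Fin n` (0-indexed, junk
value `1` when out of range). -/
def adjTransposition (n : ℕ) (h : ℕ) : Equiv.Perm (Fin n) :=
  if hh : h + 1 < n then Equiv.swap ⟨h, by omega⟩ ⟨h + 1, hh⟩ else 1

/-!
Read the letters of `w^(n-1)` starting from the identity permutation, viewed in one-line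
notation, and keep a letter `h` exactly when positions `h, h + 1` form an ascent, in which case
the two entries are swapped (multiplication by `s_h` on the right). Every kept letter creates
exactly one new inversion, so the kept letters form a reduced word for the final permutation.

That permutation is `w₀`. By the 0-1 principle it suffices to follow, for each threshold `s`,
the number of values `≥ s` among the first `m` positions. The swap at `h` raises this number at
`m = h + 1` to the minimum of its values at `m + 1` and at `m - 1` plus one, and leaves it
unchanged elsewhere; since every letter occurs in `w`, after `n - 1` passes all `n - s` large
values stand in front.
-/

open Equiv Finset

namespace BubbleSort

variable {n : ℕ}

lemma adjTransposition_eq {h : ℕ} (hh : h + 1 < n) :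
    adjTransposition n h = swap ⟨h, by omega⟩ ⟨h + 1, hh⟩ :=
  dif_pos hh

lemma val_adjTransposition_apply {h : ℕ} (hh : h + 1 < n) (p : Fin n) :
    (adjTransposition n h p : ℕ) =
      if (p : ℕ) = h then h + 1 else if (p : ℕ) = h + 1 then h else p := by
  rw [adjTransposition_eq hh, swap_apply_def]
  split_ifs <;> simp_all [Fin.ext_iff]

lemma adjTransposition_apply_left {h : ℕ} (hh : h + 1 < n) :
    adjTransposition n h ⟨h, by omega⟩ = ⟨h + 1, hh⟩ := by
  rw [adjTransposition_eq hh, swap_apply_left]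

lemma adjTransposition_apply_right {h : ℕ} (hh : h + 1 < n) :
    adjTransposition n h ⟨h + 1, hh⟩ = ⟨h, by omega⟩ := by
  rw [adjTransposition_eq hh, swap_apply_right]

lemma adjTransposition_symm (h : ℕ) : (adjTransposition n h).symm = adjTransposition n h := by
  unfold adjTransposition
  split_ifs
  · exact symm_swap _ _
  · rfl

def IsAscent (π : Perm (Fin n)) (h : ℕ) : Prop :=
  ∃ hh : h + 1 < n, π ⟨h, by omega⟩ < π ⟨h + 1, hh⟩

instance (π : Perm (Fin n)) (h : ℕ) : Decidable (IsAscent π h) := by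
  unfold IsAscent; infer_instance

def sortStep (π : Perm (Fin n)) (h : ℕ) : Perm (Fin n) :=
  if IsAscent π h then π * adjTransposition n h else π

def swapWord : Perm (Fin n) → List ℕ → List ℕ
  | _, [] => []
  | π, h :: l =>
    if IsAscent π h then h :: swapWord (π * adjTransposition n h) l else swapWord π l

lemma swapWord_sublist (π : Perm (Fin n)) (l : List ℕ) : (swapWord π l).Sublist l := by
  induction l generalizing π with
  | nil => exact .slnil
  | cons h l ih =>
    unfold swapWord
    split_ifs
    · exact (ih _).cons_cons h
    · exact (ih _).cons h

lemma mul_prod_swapWord (π : Perm (Fin n)) (l : List ℕ) :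
    π * ((swapWord π l).map (adjTransposition n)).prod = l.foldl sortStep π := by
  induction l generalizing π with
  | nil => simp [swapWord]
  | cons h l ih =>
    rw [List.foldl_cons, sortStep, swapWord]
    split_ifs
    · rw [List.map_cons, List.prod_cons, ← mul_assoc, ih]
    · exact ih π

def inversions (π : Perm (Fin n)) : Finset (Fin n × Fin n) :=
  {x | x.1 < x.2 ∧ π x.2 < π x.1}

@[simp]
lemma mem_inversions {π : Perm (Fin n)} {x : Fin n × Fin n} :
    x ∈ inversions π ↔ x.1 < x.2 ∧ π x.2 < π x.1 := by
  simp [inversions]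

lemma card_inversions_mul_adjTransposition {π : Perm (Fin n)} {h : ℕ} (hπ : IsAscent π h) :
    #(inversions (π * adjTransposition n h)) = #(inversions π) + 1 := by
  obtain ⟨hh, hlt⟩ := hπ
  set σ := adjTransposition n h
  have key : inversions (π * σ) = insert (⟨h, by omega⟩, ⟨h + 1, hh⟩)
      ((inversions π).map (σ.prodCongr σ).toEmbedding) := by
    ext ⟨x, y⟩
    simp only [mem_inversions, mem_insert, mem_map_equiv, Perm.mul_apply, Prod.mk.injEq,
      prodCongr_symm, prodCongr_apply, Prod.map, σ, adjTransposition_symm]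
    by_cases hab : x = ⟨h, by omega⟩ ∧ y = ⟨h + 1, hh⟩
    · obtain ⟨rfl, rfl⟩ := hab
      simp [adjTransposition_apply_left hh, adjTransposition_apply_right hh, hlt]
    by_cases hba : x = ⟨h + 1, hh⟩ ∧ y = ⟨h, by omega⟩
    · obtain ⟨rfl, rfl⟩ := hba
      simp [adjTransposition_apply_left hh, adjTransposition_apply_right hh, hlt.asymm]
    have hord : x < y ↔ adjTransposition n h x < adjTransposition n h y := by
      simp only [Fin.ext_iff] at hab hba
      rw [Fin.lt_def, Fin.lt_def, val_adjTransposition_apply hh, val_adjTransposition_apply hh]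
      split_ifs <;> omega
    simp only [hab, false_or, hord]
  rw [key, card_insert_of_notMem, card_map]
  simp [σ, adjTransposition_symm, adjTransposition_apply_left hh, adjTransposition_apply_right hh]

lemma card_inversions_foldl_sortStep (π : Perm (Fin n)) (l : List ℕ) :
    #(inversions (l.foldl sortStep π)) = #(inversions π) + (swapWord π l).length := by
  induction l generalizing π with
  | nil => rfl
  | cons h l ih =>
    rw [List.foldl_cons, sortStep, swapWord]
    split_ifs with hπ
    · rw [ih, List.length_cons, card_inversions_mul_adjTransposition hπ]; ring
    · exact ih π

lemma inversions_one : inversions (1 : Perm (Fin n)) = ∅ := by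
  rw [inversions, filter_eq_empty_iff]
  exact fun x _ hx => hx.1.asymm hx.2

lemma card_inversions_revPerm : #(inversions (Fin.revPerm : Perm (Fin n))) = n.choose 2 := by
  simpa [inversions] using Fintype.card_product_filter_lt (α := Fin n)

def prefixCount (π : Perm (Fin n)) (s m : ℕ) : ℕ :=
  #{p : Fin n | (p : ℕ) < m ∧ s ≤ (π p : ℕ)}

lemma prefixCount_zero (π : Perm (Fin n)) (s : ℕ) : prefixCount π s 0 = 0 := by
  simp [prefixCount]

lemma prefixCount_succ (π : Perm (Fin n)) (s : ℕ) {m : ℕ} (hm : m < n) :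
    prefixCount π s (m + 1) =
      prefixCount π s m + if s ≤ (π ⟨m, hm⟩ : ℕ) then 1 else 0 := by
  unfold prefixCount
  split_ifs with hs
  · rw [← card_insert_of_notMem (a := (⟨m, hm⟩ : Fin n)) (by simp)]
    congr 1
    ext p
    simp only [Finset.mem_filter, mem_univ, true_and, mem_insert, Fin.ext_iff]
    grind
  · rw [add_zero]
    congr 1
    ext p
    simp only [Finset.mem_filter, mem_univ, true_and]
    grind

lemma prefixCount_mul_of_forall_lt_iff {π σ : Perm (Fin n)} {s m : ℕ}
    (hσ : ∀ p, (σ p : ℕ) < m ↔ (p : ℕ) < m) :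
    prefixCount (π * σ) s m = prefixCount π s m :=
  card_equiv σ fun p => by
    simp only [Finset.mem_filter, mem_univ, true_and, hσ]; rfl

lemma prefixCount_one (s : ℕ) {m : ℕ} (hm : m ≤ n) :
    prefixCount (1 : Perm (Fin n)) s m = m - s := by
  induction m with
  | zero => rw [prefixCount_zero, Nat.zero_sub]
  | succ m ih =>
    rw [prefixCount_succ _ _ hm, ih (by omega)]
    split_ifs with hs <;> simp only [Perm.one_apply] at hs <;> omega

lemma prefixCount_self (π : Perm (Fin n)) (s : ℕ) : prefixCount π s n = n - s := by
  rw [← one_mul π, prefixCount_mul_of_forall_lt_iff fun p => iff_of_true (π p).isLt p.isLt,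
    prefixCount_one s le_rfl]

lemma prefixCount_sortStep_of_ne (π : Perm (Fin n)) (s : ℕ) {h m : ℕ} (hm : m ≠ h + 1) :
    prefixCount (sortStep π h) s m = prefixCount π s m := by
  unfold sortStep
  split_ifs with hπ
  · obtain ⟨hh, -⟩ := hπ
    refine prefixCount_mul_of_forall_lt_iff fun p => ?_
    rw [val_adjTransposition_apply hh]
    split_ifs <;> omega
  · rfl

lemma sortStep_apply_left (π : Perm (Fin n)) {h : ℕ} (hh : h + 1 < n) :
    sortStep π h ⟨h, by omega⟩ = max (π ⟨h, by omega⟩) (π ⟨h + 1, hh⟩) := by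
  unfold sortStep
  split_ifs with hπ
  · obtain ⟨_, hlt⟩ := hπ
    rw [Perm.mul_apply, adjTransposition_apply_left hh, max_eq_right hlt.le]
  · exact (max_eq_left (not_lt.1 fun hlt => hπ ⟨hh, hlt⟩)).symm

lemma prefixCount_sortStep_self (π : Perm (Fin n)) (s : ℕ) {h : ℕ} (hh : h + 1 < n) :
    prefixCount (sortStep π h) s (h + 1) =
      min (prefixCount π s (h + 2)) (prefixCount π s h + 1) := by
  rw [prefixCount_succ _ _ (by omega), prefixCount_sortStep_of_ne _ _ (by omega),
    sortStep_apply_left _ hh, Fin.coe_max, prefixCount_succ _ _ hh, prefixCount_succ _ _ (by omega)]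
  split_ifs <;> omega

lemma prefixCount_le_sortStep (π : Perm (Fin n)) (s h m : ℕ) :
    prefixCount π s m ≤ prefixCount (sortStep π h) s m := by
  by_cases hm : m = h + 1
  · subst hm
    by_cases hh : h + 1 < n
    · rw [prefixCount_sortStep_self _ _ hh, prefixCount_succ _ _ hh,
        prefixCount_succ _ _ (by omega)]
      split_ifs <;> omega
    · rw [sortStep, if_neg fun hπ => hh hπ.1]
  · rw [prefixCount_sortStep_of_ne _ _ hm]

lemma prefixCount_le_foldl_sortStep (π : Perm (Fin n)) (s m : ℕ) (l : List ℕ) :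
    prefixCount π s m ≤ prefixCount (l.foldl sortStep π) s m := by
  induction l generalizing π with
  | nil => exact le_rfl
  | cons h l ih => exact (prefixCount_le_sortStep π s h m).trans (ih _)

lemma min_le_prefixCount_foldl_sortStep (π : Perm (Fin n)) (s : ℕ) {m : ℕ} (hm : m + 1 < n)
    {l : List ℕ} (hl : m ∈ l) :
    min (prefixCount π s (m + 2)) (prefixCount π s m + 1) ≤
      prefixCount (l.foldl sortStep π) s (m + 1) := by
  obtain ⟨l₁, l₂, rfl⟩ := List.append_of_mem hl
  set π₁ := l₁.foldl sortStep π
  calc min (prefixCount π s (m + 2)) (prefixCount π s m + 1)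
      ≤ min (prefixCount π₁ s (m + 2)) (prefixCount π₁ s m + 1) :=
        min_le_min (prefixCount_le_foldl_sortStep _ _ _ _)
          (Nat.add_le_add_right (prefixCount_le_foldl_sortStep _ _ _ _) 1)
    _ = prefixCount (sortStep π₁ m) s (m + 1) := (prefixCount_sortStep_self _ _ hm).symm
    _ ≤ _ := by
      rw [List.foldl_append, List.foldl_cons]
      exact prefixCount_le_foldl_sortStep _ _ _ _

/-- Writing `f t m` for the left-hand side: `f 0 m ≤ m - s`, the count of the identity;
`f (t + 1) m ≤ min (f t (m + 1)) (f t (m - 1) + 1)`, the gain of one pass; and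
`f (n - 1) (n - s) = n - s`. -/
lemma le_prefixCount_passes {w : List ℕ} (hw : ∀ h, h + 1 < n → h ∈ w) (s t : ℕ) {m : ℕ}
    (hm : m ≤ n) :
    min m (min (n - s) ((m + t + 1 - s) / 2)) ≤
      prefixCount ((List.replicate t w).flatten.foldl sortStep (1 : Perm (Fin n))) s m := by
  induction t generalizing m with
  | zero =>
    rw [List.replicate_zero, List.flatten_nil, List.foldl_nil, prefixCount_one s hm]
    omega
  | succ t ih =>
    rw [List.replicate_succ', List.flatten_append, List.foldl_append, List.flatten_singleton]
    rcases Nat.eq_zero_or_pos m with rfl | hm₀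
    · exact (Nat.min_eq_left (Nat.zero_le _)).trans_le (Nat.zero_le _)
    rcases hm.lt_or_eq with hmn | rfl
    · have hstep := min_le_prefixCount_foldl_sortStep
        ((List.replicate t w).flatten.foldl sortStep (1 : Perm (Fin n))) s (m := m - 1) (by omega)
        (hw (m - 1) (by omega))
      rw [show m - 1 + 2 = m + 1 by omega, show m - 1 + 1 = m by omega] at hstep
      have := ih (m := m + 1) (by omega)
      have := ih (m := m - 1) (by omega)
      omega
    · rw [prefixCount_self]
      omega

lemma le_apply_of_le_prefixCount {π : Perm (Fin n)} {s m : ℕ} (hc : m ≤ prefixCount π s m)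
    {p : Fin n} (hp : (p : ℕ) < m) : s ≤ (π p : ℕ) := by
  have hsub : ({q | (q : ℕ) < m ∧ s ≤ (π q : ℕ)} : Finset (Fin n)) ⊆
      ({q | (q : ℕ) < m} : Finset (Fin n)) :=
    fun q hq => by
      rw [Finset.mem_filter] at hq ⊢
      exact ⟨hq.1, hq.2.1⟩
  have heq := eq_of_subset_of_card_le hsub <| by
    rw [Fin.card_filter_val_lt]
    exact (min_le_right _ _).trans hc
  have hmem : p ∈ ({q : Fin n | (q : ℕ) < m} : Finset (Fin n)) := by simpa using hp
  rw [← heq, Finset.mem_filter] at hmem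
  exact hmem.2.2

lemma perm_eq_of_forall_apply_le {σ τ : Perm (Fin n)} (h : ∀ p, σ p ≤ τ p) : σ = τ := by
  have hsum : ∑ p, (σ p : ℕ) = ∑ p, (τ p : ℕ) := by
    rw [Equiv.sum_comp σ (fun p => (p : ℕ)), Equiv.sum_comp τ (fun p => (p : ℕ))]
  ext p
  exact (sum_eq_sum_iff_of_le fun p _ => Fin.le_def.1 (h p)).1 hsum p (mem_univ p)

lemma foldl_sortStep_passes_eq_revPerm {w : List ℕ} (hw : ∀ h, h + 1 < n → h ∈ w) :
    (List.replicate (n - 1) w).flatten.foldl sortStep (1 : Perm (Fin n)) = Fin.revPerm := by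
  refine (perm_eq_of_forall_apply_le fun p => ?_).symm
  have hp := p.isLt
  have hcount := le_prefixCount_passes hw (n - (p + 1)) (n - 1) (m := p + 1) (by omega)
  rw [Fin.revPerm_apply, Fin.le_def, Fin.val_rev]
  exact le_apply_of_le_prefixCount (m := p + 1) (by omega) (Nat.lt_succ_self _)

end BubbleSort

open BubbleSort

/-- If `w` is a word containing each of the `n-1` adjacent-transposition symbols
exactly once, then the concatenation of `n-1` copies of `w` contains as a subword
a reduced word for the longest element `w₀` (the order-reversing permutation) of
the symmetric group `S_n`, i.e. a word of length `n(n-1)/2` whose product of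
generators is `w₀`. -/
theorem stmt19 (n : ℕ) (w : List ℕ) (hw : w.Perm (List.range (n - 1))) :
    ∃ j : List ℕ, j.Sublist (List.replicate (n - 1) w).flatten ∧
      j.length = n * (n - 1) / 2 ∧
      (j.map (adjTransposition n)).prod = (Fin.revPerm : Equiv.Perm (Fin n)) := by
  set l := (List.replicate (n - 1) w).flatten
  have hsorted : l.foldl sortStep (1 : Perm (Fin n)) = Fin.revPerm :=
    foldl_sortStep_passes_eq_revPerm fun h hh => hw.mem_iff.2 (List.mem_range.2 (by omega))
  refine ⟨swapWord 1 l, swapWord_sublist (1 : Perm (Fin n)) l, ?_, ?_⟩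
  · have hlen := card_inversions_foldl_sortStep (1 : Perm (Fin n)) l
    rw [hsorted, card_inversions_revPerm, inversions_one, card_empty, zero_add] at hlen
    rw [← hlen, Nat.choose_two_right]
  · rw [← one_mul (List.prod _), mul_prod_swapWord, hsorted]
end
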